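/- arXiv:2504.20975 — 8 statements merged into one kernel-verified Lean document; each statement's English description precedes it below -/
import Mathlib

section
/- Let n ≥ 1 and let A be a plucking on [n-1], i.e. a nonempty collection of subsets of [n-1] = {1,…,n-1} that is upward closed under inclusion. Let M_1, …, M_k be the inclusion-minimal members of A, and let S ∈ A. If there exists an element i ∈ S with i ∉ M_1 ∪ ⋯ ∪ M_k, then χ_A(S) = 0, where χ_A(S) = Σ_{T ∈ A, T ⊆ S} (−1)^{|S|−|T|}. -/
/-!
Toggling the element `i` is a sign-reversing involution on `{T ∈ A | T ⊆ S}`. It stays inside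
`A` because adding `i` preserves membership by upward closure, while removing `i` does too: every
`T ∈ A` contains a minimal member `M` of `A`, and `i ∉ M`, so `M ⊆ T.erase i`.
-/

namespace Finset

variable {α : Type*} [DecidableEq α]

lemma neg_one_pow_card_sub_add_neg_one_pow_card_sub_insert {S T : Finset α} {i : α}
    (hiS : i ∈ S) (hTS : T ⊆ S) (hiT : i ∉ T) :
    (-1 : ℤ) ^ (S.card - T.card) + (-1) ^ (S.card - (insert i T).card) = 0 := by
  have hcard : T.card + 1 ≤ S.card := by
    simpa [card_insert_of_notMem hiT] using card_le_card (insert_subset hiS hTS)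
  rw [card_insert_of_notMem hiT, show S.card - T.card = S.card - (T.card + 1) + 1 by omega,
    pow_succ]
  ring

theorem sum_neg_one_pow_card_sub_eq_zero_of_insert_erase_mem {A : Finset (Finset α)}
    {S : Finset α} {i : α} (hiS : i ∈ S)
    (hinsert : ∀ T ∈ A, T ⊆ S → insert i T ∈ A) (herase : ∀ T ∈ A, T ⊆ S → T.erase i ∈ A) :
    ∑ T ∈ A.filter (· ⊆ S), (-1 : ℤ) ^ (S.card - T.card) = 0 := by
  refine sum_involution (fun T _ => if i ∈ T then T.erase i else insert i T) ?_ ?_ ?_ ?_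
  · intro T hT
    have hTS : T ⊆ S := (mem_filter.mp hT).2
    by_cases hiT : i ∈ T
    · rw [if_pos hiT]
      have := neg_one_pow_card_sub_add_neg_one_pow_card_sub_insert hiS
        ((erase_subset i T).trans hTS) (notMem_erase i T)
      rwa [insert_erase hiT, add_comm] at this
    · rw [if_neg hiT]
      exact neg_one_pow_card_sub_add_neg_one_pow_card_sub_insert hiS hTS hiT
  · intro T _ _
    by_cases hiT : i ∈ T
    · rw [if_pos hiT]
      exact fun h => notMem_erase i T (by rwa [h])
    · rw [if_neg hiT]
      exact fun h => hiT (h ▸ mem_insert_self i T)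
  · intro T hT
    obtain ⟨hTA, hTS⟩ := mem_filter.mp hT
    split_ifs with hiT
    · exact mem_filter.mpr ⟨herase T hTA hTS, (erase_subset i T).trans hTS⟩
    · exact mem_filter.mpr ⟨hinsert T hTA hTS, insert_subset hiS hTS⟩
  · intro T _
    by_cases hiT : i ∈ T
    · simp [hiT, insert_erase hiT]
    · simp [hiT, erase_insert hiT]

lemma erase_mem_of_notMem_minimal {A : Finset (Finset α)} {U : Finset α} {i : α}
    (hup : ∀ S ∈ A, ∀ T : Finset α, S ⊆ T → T ⊆ U → T ∈ A)
    (hi : ∀ M ∈ A, (∀ M' ∈ A, M' ⊆ M → M' = M) → i ∉ M)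
    {T : Finset α} (hT : T ∈ A) (hTU : T ⊆ U) : T.erase i ∈ A := by
  obtain ⟨M, hMT, hM⟩ := A.exists_le_minimal hT
  have hiM : i ∉ M := hi M hM.prop fun M' hM' hM'M => hM.eq_of_le hM' hM'M
  exact hup M hM.prop _ (subset_erase.mpr ⟨hMT, hiM⟩) ((erase_subset i T).trans hTU)

end Finset

theorem stmt0_general (n : ℕ) (A : Finset (Finset ℕ))
    (hsub : ∀ S ∈ A, S ⊆ Finset.Ico 1 n)
    (hup : ∀ S ∈ A, ∀ T : Finset ℕ, S ⊆ T → T ⊆ Finset.Ico 1 n → T ∈ A)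
    (S : Finset ℕ) (hS : S ∈ A) (i : ℕ) (hiS : i ∈ S)
    (hi : ∀ M ∈ A, (∀ M' ∈ A, M' ⊆ M → M' = M) → i ∉ M) :
    (∑ T ∈ A.filter (· ⊆ S), (-1 : ℤ) ^ (S.card - T.card)) = 0 :=
  Finset.sum_neg_one_pow_card_sub_eq_zero_of_insert_erase_mem hiS
    (fun T hT hTS => hup T hT _ (Finset.subset_insert i T)
      ((Finset.insert_subset hiS hTS).trans (hsub S hS)))
    (fun T hT _ => Finset.erase_mem_of_notMem_minimal hup hi hT (hsub T hT))

/-- If `A` is a plucking on `[n-1]` (a nonempty upward-closed family of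
subsets of `{1,…,n-1}`), `S ∈ A`, and some `i ∈ S` lies in no inclusion-minimal
member of `A`, then `χ_A(S) = Σ_{T ∈ A, T ⊆ S} (−1)^{|S|−|T|} = 0`. -/
theorem stmt0 (n : ℕ) (hn : 1 ≤ n) (A : Finset (Finset ℕ))
    (hne : A.Nonempty)
    (hsub : ∀ S ∈ A, S ⊆ Finset.Ico 1 n)
    (hup : ∀ S ∈ A, ∀ T : Finset ℕ, S ⊆ T → T ⊆ Finset.Ico 1 n → T ∈ A)
    (S : Finset ℕ) (hS : S ∈ A) (i : ℕ) (hiS : i ∈ S)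
    (hi : ∀ M ∈ A, (∀ M' ∈ A, M' ⊆ M → M' = M) → i ∉ M) :
    (∑ T ∈ A.filter (· ⊆ S), (-1 : ℤ) ^ (S.card - T.card)) = 0 :=
  stmt0_general n A hsub hup S hS i hiS hi
end

section
/- Let P be a partial order on [n]. For every K ⊆ [n-1], the number of P-listings ω such that K is a set of border points of ω satisfies |Σ_P(K)| = Σ_{I ⊆ K} Σ_{ω ∈ Σ_P(I)} Σ_{J ∈ Comp(P,ω), J ⊆ I} (−1)^{|I|−|J|}. (Equivalently, the coefficient of the fundamental quasisymmetric function F_I in the linear function L_P equals Σ_{ω ∈ Σ_P(I)} χ_{Comp(P,ω)}(I).) -/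
/-- `S ⊆ [n-1]` is a set of border points of the listing `ω` w.r.t. `le` on `[n]`. -/
def IsBorderSet (n : ℕ) (le : Fin n → Fin n → Prop) (ω : Equiv.Perm (Fin n))
    (S : Finset ℕ) : Prop :=
  S ⊆ Finset.Ico 1 n ∧
    ∀ i j : Fin n, i < j → (∀ s ∈ S, ¬((i : ℕ) < s ∧ s ≤ (j : ℕ))) → ¬ le (ω j) (ω i)

instance (n : ℕ) (le : Fin n → Fin n → Prop) [DecidableRel le] (ω : Equiv.Perm (Fin n))
    (S : Finset ℕ) : Decidable (IsBorderSet n le ω S) := by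
  unfold IsBorderSet; infer_instance

/-- `Comp(P, ω)`: the collection of all sets of border points of `ω`. -/
def CompSet (n : ℕ) (le : Fin n → Fin n → Prop) [DecidableRel le]
    (ω : Equiv.Perm (Fin n)) : Finset (Finset ℕ) :=
  (Finset.Ico 1 n).powerset.filter (IsBorderSet n le ω)

/-- Border sets are upward closed among subsets of `[n-1]`. -/
lemma border_mono (n : ℕ) (le : Fin n → Fin n → Prop) (ω : Equiv.Perm (Fin n))
    {J I : Finset ℕ} (hJ : IsBorderSet n le ω J) (hJI : J ⊆ I)
    (hI : I ⊆ Finset.Ico 1 n) : IsBorderSet n le ω I :=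
  ⟨hI, fun i j hij h => hJ.2 i j hij fun s hs => h s (hJI hs)⟩

/-- The alternating sum over the interval `J ⊆ I ⊆ K`. -/
lemma alt_sum_interval (J K : Finset ℕ) (hJK : J ⊆ K) :
    ∑ I ∈ K.powerset.filter (J ⊆ ·), (-1 : ℤ) ^ (I.card - J.card) =
      if J = K then 1 else 0 := by
  have h := Finset.sum_powerset_neg_one_pow_card (x := K \ J) (α := ℕ)
  rw [show (∑ I ∈ K.powerset.filter (J ⊆ ·), (-1 : ℤ) ^ (I.card - J.card)) =
      ∑ T ∈ (K \ J).powerset, (-1 : ℤ) ^ T.card from ?_, h]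
  · congr 1
    simp only [Finset.sdiff_eq_empty_iff_subset, eq_iff_iff]
    constructor
    · intro hKJ; exact Finset.Subset.antisymm hJK hKJ
    · intro hh; exact hh ▸ le_refl _
  · refine Finset.sum_nbij' (fun I => I \ J) (fun T => T ∪ J) ?_ ?_ ?_ ?_ ?_
    · intro I hI
      simp only [Finset.mem_filter, Finset.mem_powerset] at hI ⊢
      exact Finset.sdiff_subset_sdiff hI.1 le_rfl
    · intro T hT
      simp only [Finset.mem_filter, Finset.mem_powerset] at hT ⊢
      constructor
      · exact Finset.union_subset (hT.trans (Finset.sdiff_subset)) hJK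
      · exact Finset.subset_union_right
    · intro I hI
      simp only [Finset.mem_filter, Finset.mem_powerset] at hI
      exact Finset.sdiff_union_of_subset hI.2
    · intro T hT
      simp only [Finset.mem_powerset] at hT
      show (T ∪ J) \ J = T
      rw [Finset.union_sdiff_right, Finset.sdiff_eq_self_iff_disjoint]
      exact Finset.disjoint_left.mpr fun a ha => (Finset.mem_sdiff.mp (hT ha)).2
    · intro I hI
      simp only [Finset.mem_filter, Finset.mem_powerset] at hI
      rw [Finset.card_sdiff_of_subset hI.2]

/-- for every `K ⊆ [n-1]`,
`|Σ_P(K)| = Σ_{I ⊆ K} Σ_{ω ∈ Σ_P(I)} Σ_{J ∈ Comp(P,ω), J ⊆ I} (−1)^{|I|−|J|}`. -/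
theorem stmt5 (n : ℕ) (le : Fin n → Fin n → Prop) [DecidableRel le]
    (hle : IsPartialOrder (Fin n) le) (K : Finset ℕ) (hK : K ⊆ Finset.Ico 1 n) :
    ((Finset.univ.filter fun ω : Equiv.Perm (Fin n) => IsBorderSet n le ω K).card : ℤ) =
      ∑ I ∈ K.powerset,
        ∑ ω ∈ Finset.univ.filter fun ω : Equiv.Perm (Fin n) => IsBorderSet n le ω I,
          ∑ J ∈ (CompSet n le ω).filter (· ⊆ I), (-1 : ℤ) ^ (I.card - J.card) := by
  -- Step 1: the filter on ω is redundant (inner sum vanishes otherwise).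
  have step1 : ∀ I ∈ K.powerset,
      (∑ ω ∈ Finset.univ.filter fun ω : Equiv.Perm (Fin n) => IsBorderSet n le ω I,
          ∑ J ∈ (CompSet n le ω).filter (· ⊆ I), (-1 : ℤ) ^ (I.card - J.card)) =
      ∑ ω : Equiv.Perm (Fin n),
          ∑ J ∈ (CompSet n le ω).filter (· ⊆ I), (-1 : ℤ) ^ (I.card - J.card) := by
    intro I hI
    rw [Finset.mem_powerset] at hI
    refine Finset.sum_subset (Finset.filter_subset _ _) ?_
    intro ω _ hω
    simp only [Finset.mem_filter, Finset.mem_univ, true_and] at hω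
    rw [show (CompSet n le ω).filter (· ⊆ I) = ∅ from ?_, Finset.sum_empty]
    rw [Finset.eq_empty_iff_forall_notMem]
    intro J hJ
    simp only [CompSet, Finset.mem_filter, Finset.mem_powerset] at hJ
    exact hω (border_mono n le ω hJ.1.2 hJ.2 (hI.trans hK))
  rw [Finset.sum_congr rfl step1, Finset.sum_comm]
  -- Step 2: for fixed ω, the double sum is the indicator of `IsBorderSet n le ω K`.
  have step2 : ∀ ω : Equiv.Perm (Fin n),
      (∑ I ∈ K.powerset, ∑ J ∈ (CompSet n le ω).filter (· ⊆ I),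
          (-1 : ℤ) ^ (I.card - J.card)) =
      if IsBorderSet n le ω K then 1 else 0 := by
    intro ω
    have : ∀ I ∈ K.powerset,
        (∑ J ∈ (CompSet n le ω).filter (· ⊆ I), (-1 : ℤ) ^ (I.card - J.card)) =
        ∑ J ∈ CompSet n le ω, if J ⊆ I then (-1 : ℤ) ^ (I.card - J.card) else 0 := by
      intro I _; rw [Finset.sum_filter]
    rw [Finset.sum_congr rfl this, Finset.sum_comm]
    have key : ∀ J ∈ CompSet n le ω,
        (∑ I ∈ K.powerset, if J ⊆ I then (-1 : ℤ) ^ (I.card - J.card) else 0) =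
        if J = K then 1 else 0 := by
      intro J _
      rw [← Finset.sum_filter]
      by_cases hJK : J ⊆ K
      · exact alt_sum_interval J K hJK
      · rw [if_neg (by rintro rfl; exact hJK le_rfl)]
        rw [show K.powerset.filter (J ⊆ ·) = ∅ from ?_, Finset.sum_empty]
        rw [Finset.eq_empty_iff_forall_notMem]
        intro I hI
        simp only [Finset.mem_filter, Finset.mem_powerset] at hI
        exact hJK (hI.2.trans hI.1)
    rw [Finset.sum_congr rfl key, Finset.sum_ite_eq' (CompSet n le ω) K (fun _ => (1 : ℤ))]
    simp only [CompSet, Finset.mem_filter, Finset.mem_powerset]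
    congr 1
    simp [hK]
  rw [Finset.sum_congr rfl (fun ω _ => step2 ω)]
  rw [Finset.sum_boole]
end

section
/- Let P be a finite nonempty (2+2)-free poset, and for p ∈ P let D_P(p) = {q ∈ P : p ≤_P q}. Suppose a ∈ P satisfies |D_P(a)| ≥ |D_P(q)| for all q ∈ P. Then a is a minimal element of P, and every element of P that is incomparable with a is also a minimal element of P. -/
/-!
Let `D(x) = {r | x ≤ r}`. If `q < a` then `D(a) ⊊ D(q)`, so `a` cannot maximize `|D|` unless it
is minimal. If `q < p` with `p` incomparable to `a`, then `p, q ∈ D(q) \ D(a)`, and `|D(q)| ≤ |D(a)|`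
forces two elements in `D(a) \ D(q)`, hence some `x > a` with `q ≰ x`; the chains `q < p` and
`a < x` then form an induced `2+2`.
-/

/-- A finite poset is `(2+2)`-free if it contains no induced subposet isomorphic to
the disjoint union of two 2-element chains. -/
def IsTTFree (β : Type*) [PartialOrder β] : Prop :=
  ¬ ∃ a b c d : β, a < b ∧ c < d ∧
    (¬ a ≤ c ∧ ¬ c ≤ a) ∧ (¬ a ≤ d ∧ ¬ d ≤ a) ∧ (¬ b ≤ c ∧ ¬ c ≤ b) ∧ (¬ b ≤ d ∧ ¬ d ≤ b)

open Finset

theorem Finset.exists_mem_notMem_ne_of_card_le {α : Type*} {s t : Finset α} (hts : #t ≤ #s)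
    {p q : α} (hpt : p ∈ t) (hps : p ∉ s) (hqt : q ∈ t) (hqs : q ∉ s) (hpq : p ≠ q) (a : α) :
    ∃ x ∈ s, x ∉ t ∧ x ≠ a := by
  classical
  have htwo : 2 ≤ #(t \ s) := by
    calc 2 = #{p, q} := (card_pair hpq).symm
      _ ≤ #(t \ s) := card_le_card (by simp [insert_subset_iff, *])
  obtain ⟨x, hx, hxa⟩ :=
    exists_mem_ne (htwo.trans (card_sdiff_le_card_sdiff_iff.mpr hts)) a
  exact ⟨x, (mem_sdiff.mp hx).1, (mem_sdiff.mp hx).2, hxa⟩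

section UpperSets

variable {β : Type*} [Fintype β] [PartialOrder β] [DecidableRel ((· ≤ ·) : β → β → Prop)]

theorem card_filter_le_lt_of_lt {q a : β} (hqa : q < a) :
    #{r | a ≤ r} < #{r | q ≤ r} :=
  have hsub : ({r | a ≤ r} : Finset β) ⊆ ({r | q ≤ r} : Finset β) :=
    monotone_filter_right _ fun _ _ => hqa.le.trans
  card_lt_card <| (ssubset_iff_of_subset hsub).mpr ⟨q, by simp, by simpa using hqa.not_ge⟩

theorem exists_lt_not_le_of_card_filter_le {a p q : β} (hqp : q < p) (hap : ¬ a ≤ p)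
    (hcard : #{r | q ≤ r} ≤ #{r | a ≤ r}) : ∃ x, a < x ∧ ¬ q ≤ x := by
  have haq : ¬ a ≤ q := fun h => hap (h.trans hqp.le)
  obtain ⟨x, hax, hqx, hxa⟩ := exists_mem_notMem_ne_of_card_le hcard
    (by simpa using hqp.le) (by simpa using hap) (by simp) (by simpa using haq) hqp.ne' a
  simp only [mem_filter, mem_univ, true_and] at hax hqx
  exact ⟨x, lt_of_le_of_ne hax hxa.symm, hqx⟩

end UpperSets

theorem IsTTFree.le_of_lt_of_lt {β : Type*} [PartialOrder β] (hfree : IsTTFree β) {a p q x : β}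
    (hqp : q < p) (hax : a < x) (hpa : ¬ p ≤ a) (hap : ¬ a ≤ p) : q ≤ x := by
  by_contra hqx
  exact hfree ⟨q, p, a, x, hqp, hax,
    ⟨fun h => hqx (h.trans hax.le), fun h => hap (h.trans hqp.le)⟩,
    ⟨hqx, fun h => hap (hax.le.trans (h.trans hqp.le))⟩,
    ⟨hpa, hap⟩,
    ⟨fun h => hqx (hqp.le.trans h), fun h => hap (hax.le.trans h)⟩⟩

theorem stmt8_general (β : Type*) [Fintype β] [PartialOrder β]
    [DecidableRel ((· ≤ ·) : β → β → Prop)] (hfree : IsTTFree β) (a : β)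
    (ha : ∀ q : β, (Finset.univ.filter fun r => q ≤ r).card ≤
        (Finset.univ.filter fun r => a ≤ r).card) :
    (∀ q : β, ¬ q < a) ∧
      ∀ p : β, (¬ p ≤ a ∧ ¬ a ≤ p) → ∀ q : β, ¬ q < p := by
  refine ⟨fun q hqa => (ha q).not_gt (card_filter_le_lt_of_lt hqa), ?_⟩
  rintro p ⟨hpa, hap⟩ q hqp
  obtain ⟨x, hax, hqx⟩ := exists_lt_not_le_of_card_filter_le hqp hap (ha q)
  exact hqx (hfree.le_of_lt_of_lt hqp hax hpa hap)

/-- in a finite nonempty `(2+2)`-free poset, if `a` maximizes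
`|D_P(a)| = |{q : a ≤ q}|`, then `a` is minimal, and every element incomparable
with `a` is minimal as well. -/
theorem stmt8 (β : Type*) [Fintype β] [Nonempty β] [DecidableEq β] [PartialOrder β]
    [DecidableRel ((· ≤ ·) : β → β → Prop)] (hfree : IsTTFree β) (a : β)
    (ha : ∀ q : β, (Finset.univ.filter fun r => q ≤ r).card ≤
        (Finset.univ.filter fun r => a ≤ r).card) :
    (∀ q : β, ¬ q < a) ∧
      ∀ p : β, (¬ p ≤ a ∧ ¬ a ≤ p) → ∀ q : β, ¬ q < p :=
  stmt8_general β hfree a ha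
end

section
/- Let P be a finite (2+2)-free poset. Then the number of linear extensions of P equals the number of permutations σ of the ground set of P such that every orbit (cycle) of σ is an antichain of P. -/
open Set Equiv

theorem Nat.card_subtype_eq_sum_card_fiber {ι κ : Type*} [Finite ι] [Fintype κ] (p : ι → Prop)
    (f : ι → κ) : Nat.card {i // p i} = ∑ k, Nat.card {i : {i // f i = k} // p i} := by
  rw [← Nat.card_sigma]
  refine Nat.card_congr ((sigmaFiberEquiv (f ∘ Subtype.val)).symm.trans
    (sigmaCongrRight fun k => ?_))
  exact (subtypeSubtypeEquivSubtypeInter p (f · = k)).trans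
    ((subtypeEquivRight fun _ => and_comm).trans (subtypeSubtypeEquivSubtypeInter _ p).symm)

section TTFree

variable {α β : Type*} [PartialOrder α] [PartialOrder β]

theorem IsTTFree.of_orderEmbedding (h : IsTTFree β) (f : α ↪o β) : IsTTFree α := by
  rintro ⟨a, b, c, d, hab⟩
  exact h ⟨f a, f b, f c, f d, by simpa only [f.le_iff_le, f.lt_iff_lt] using hab⟩

theorem IsTTFree.Ioi_subset_or_Ioi_subset (h : IsTTFree β) (a b : β) :
    Ioi a ⊆ Ioi b ∨ Ioi b ⊆ Ioi a := by
  by_contra! hcon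
  obtain ⟨⟨c, hac, hbc⟩, ⟨d, hbd, had⟩⟩ := And.imp not_subset.1 not_subset.1 hcon
  simp only [mem_Ioi] at hac hbc hbd had
  exact h ⟨a, c, b, d, hac, hbd, ⟨by order, by order⟩, ⟨by order, by order⟩,
    ⟨by order, by order⟩, ⟨by order, by order⟩⟩

/-- Take `x₁` with a maximal strict up-set: since these up-sets form a chain, it contains
all the others. -/
theorem IsTTFree.exists_isMin_forall_lt [Finite β] [Nonempty β] (h : IsTTFree β) :
    ∃ x₁ : β, IsMin x₁ ∧ ∀ z, ¬ IsMin z → x₁ < z := by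
  obtain ⟨x₁, -, hmax⟩ := finite_univ.exists_maximalFor (Ioi : β → Set β) univ univ_nonempty
  have hIoi (w : β) : Ioi w ⊆ Ioi x₁ := (h.Ioi_subset_or_Ioi_subset x₁ w).elim (hmax trivial) id
  refine ⟨x₁, fun w hw => ?_, fun z hz => ?_⟩
  · rcases hw.lt_or_eq with hlt | rfl
    · exact absurd (hIoi w hlt) (lt_irrefl x₁)
    · exact le_rfl
  · obtain ⟨w, hwz⟩ := not_isMin_iff.1 hz
    exact hIoi w hwz

end TTFree

def IsLinearExtension {α : Type*} [Preorder α] {n : ℕ} (ω : Fin n → α) : Prop :=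
  ∀ i j, i < j → ¬ ω j ≤ ω i

section LinearExtension

variable {α : Type*} {n : ℕ}

def finSuccEquivSubtypeNe [DecidableEq α] (n : ℕ) (x : α) :
    {ω : Fin (n + 1) ≃ α // ω 0 = x} ≃ (Fin n ≃ {y : α // y ≠ x}) :=
  ((equivCongr (finSuccEquiv n) (Equiv.refl α)).subtypeEquiv fun ω => by simp).trans
    (optionSubtype x)

@[simp]
theorem coe_finSuccEquivSubtypeNe_apply [DecidableEq α] (x : α)
    (ω : {ω : Fin (n + 1) ≃ α // ω 0 = x}) (i : Fin n) :
    (finSuccEquivSubtypeNe n x ω i : α) = ω.1 i.succ := by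
  simp [finSuccEquivSubtypeNe]

variable [PartialOrder α]

theorem isLinearExtension_succ_iff {ω : Fin (n + 1) → α} :
    IsLinearExtension ω ↔
      (∀ j : Fin n, ¬ ω j.succ ≤ ω 0) ∧ IsLinearExtension fun i : Fin n => ω i.succ := by
  refine ⟨fun h => ⟨fun j => h 0 j.succ j.succ_pos,
    fun i j hij => h _ _ (Fin.succ_lt_succ_iff.2 hij)⟩, fun ⟨h0, hsucc⟩ i j hij => ?_⟩
  cases j using Fin.cases with
  | zero => exact absurd hij (Fin.not_lt_zero i)
  | succ j =>
    cases i using Fin.cases with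
    | zero => exact h0 j
    | succ i => exact hsucc i j (Fin.succ_lt_succ_iff.1 hij)

theorem IsLinearExtension.isMin_apply_zero {ω : Fin (n + 1) ≃ α} (h : IsLinearExtension ω) :
    IsMin (ω 0) := by
  intro y hy
  obtain ⟨j, rfl⟩ := ω.surjective y
  rcases eq_or_ne j 0 with rfl | hj
  · exact le_rfl
  · exact absurd hy (h 0 j (Fin.pos_iff_ne_zero.2 hj))

variable [DecidableEq α]

theorem isLinearExtension_finSuccEquivSubtypeNe_iff {x : α} (hx : IsMin x)
    (ω : {ω : Fin (n + 1) ≃ α // ω 0 = x}) :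
    IsLinearExtension (finSuccEquivSubtypeNe n x ω) ↔ IsLinearExtension ω.1 := by
  have h0 (j : Fin n) : ¬ ω.1 j.succ ≤ ω.1 0 := fun hj =>
    j.succ_ne_zero (ω.1.injective ((hx.eq_of_le (hj.trans_eq ω.2)).trans ω.2.symm))
  rw [isLinearExtension_succ_iff, and_iff_right h0]
  simp only [IsLinearExtension, ← Subtype.coe_le_coe, coe_finSuccEquivSubtypeNe_apply]

theorem card_isLinearExtension_fiber {x : α} (hx : IsMin x) :
    Nat.card {ω : {ω : Fin (n + 1) ≃ α // ω 0 = x} // IsLinearExtension ω.1} =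
      Nat.card {ω : Fin n ≃ {y : α // y ≠ x} // IsLinearExtension ω} :=
  Nat.card_congr <| (finSuccEquivSubtypeNe n x).subtypeEquiv fun ω =>
    (isLinearExtension_finSuccEquivSubtypeNe_iff hx ω).symm

end LinearExtension

namespace Equiv.Perm

variable {α β : Type*}

theorem SameCycle.map_of_forall_sameCycle {f : Perm α} {g : Perm β} (φ : α → β)
    (hφ : ∀ a, g.SameCycle (φ a) (φ (f a))) {a b : α} (h : f.SameCycle a b) :
    g.SameCycle (φ a) (φ b) := by
  obtain ⟨k, rfl⟩ := h
  induction k using Int.induction_on with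
  | zero => exact SameCycle.refl _ _
  | succ k ih =>
    rw [add_comm, zpow_add, zpow_one, mul_apply]
    exact ih.trans (hφ _)
  | pred k ih =>
    rw [sub_eq_neg_add, zpow_add, zpow_neg_one, mul_apply]
    refine ih.trans (SameCycle.symm ?_)
    simpa using hφ (f⁻¹ ((f ^ (-(k : ℤ))) a))

section Swap

variable [DecidableEq α] {σ : Perm α} {x₁ x : α}

/- When `σ x₁ = x`, the permutation `σ * swap x₁ x` fixes `x` and sends `x₁` to `σ x`:
it cuts `x` out of its cycle and leaves all other cycles alone. -/

theorem sameCycle_of_sameCycle_mul_swap (hσ : σ x₁ = x) {a b : α}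
    (h : (σ * swap x₁ x).SameCycle a b) : σ.SameCycle a b := by
  refine h.map_of_forall_sameCycle id fun a => ?_
  rw [id, id, mul_apply]
  rcases eq_or_ne a x₁ with rfl | ha₁
  · rw [swap_apply_left, ← hσ, sameCycle_apply_right, sameCycle_apply_right]
  rcases eq_or_ne a x with rfl | ha
  · rw [swap_apply_right, hσ]
  · rw [swap_apply_of_ne_of_ne ha₁ ha, sameCycle_apply_right]

theorem sameCycle_mul_swap_of_sameCycle (hσ : σ x₁ = x) {a b : α} (h : σ.SameCycle a b) :
    (σ * swap x₁ x).SameCycle (if a = x then x₁ else a) (if b = x then x₁ else b) := by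
  refine h.map_of_forall_sameCycle (fun a => if a = x then x₁ else a) fun a => ?_
  have hx₁ : (σ * swap x₁ x) x₁ = σ x := by rw [mul_apply, swap_apply_left]
  rcases eq_or_ne a x with rfl | ha
  · rw [if_pos rfl, ← hx₁]
    split_ifs
    · exact SameCycle.refl _ _
    · exact sameCycle_apply_right.2 (SameCycle.refl _ _)
  rcases eq_or_ne a x₁ with rfl | ha₁
  · rw [if_neg ha, if_pos hσ]
  have hσa : σ a ≠ x := hσ ▸ σ.injective.ne ha₁
  have hπa : (σ * swap x₁ x) a = σ a := by rw [mul_apply, swap_apply_of_ne_of_ne ha₁ ha]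
  rw [if_neg ha, if_neg hσa, ← hπa, sameCycle_apply_right]

def permApplyEqEquiv (x₁ x : α) : {σ : Perm α // σ x₁ = x} ≃ Perm {y : α // y ≠ x} :=
  ((Equiv.mulRight (swap x₁ x)).subtypeEquiv fun σ => by simp).trans
    (Perm.subtypeEquivSubtypePerm _).symm

theorem sameCycle_permApplyEqEquiv_iff (σ : {σ : Perm α // σ x₁ = x})
    {a b : {y : α // y ≠ x}} :
    (permApplyEqEquiv x₁ x σ).SameCycle a b ↔ (σ.1 * swap x₁ x).SameCycle a b := by
  simp [permApplyEqEquiv]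

end Swap

def HasAntichainCycles [Preorder α] (σ : Perm α) : Prop :=
  ∀ a b, σ.SameCycle a b → a ≠ b → ¬ a ≤ b ∧ ¬ b ≤ a

section Antichain

variable [PartialOrder α] {σ : Perm α} {x₁ x : α}

theorem hasAntichainCycles_of_forall (h : ∀ a b, σ.SameCycle a b → a ≠ b → ¬ a ≤ b) :
    σ.HasAntichainCycles :=
  fun a b hab hne => ⟨h a b hab hne, h b a hab.symm hne.symm⟩

theorem HasAntichainCycles.isMin_apply (hσ : σ.HasAntichainCycles)
    (hdom : ∀ z, ¬ IsMin z → x₁ < z) : IsMin (σ x₁) := by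
  by_contra hmin
  have hlt := hdom _ hmin
  exact (hσ _ _ (sameCycle_apply_right.2 (SameCycle.refl _ _)) hlt.ne).1 hlt.le

theorem hasAntichainCycles_permApplyEqEquiv_iff [DecidableEq α] (hx₁ : IsMin x₁)
    (hdom : ∀ z, ¬ IsMin z → x₁ < z) (hx : IsMin x) (σ : {σ : Perm α // σ x₁ = x}) :
    (permApplyEqEquiv x₁ x σ).HasAntichainCycles ↔ σ.1.HasAntichainCycles := by
  obtain ⟨σ, hσ⟩ := σ
  refine ⟨fun hτ => ?_, fun hσ' a b h hab =>
    hσ' a b (sameCycle_of_sameCycle_mul_swap hσ ((sameCycle_permApplyEqEquiv_iff _).1 h))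
      (Subtype.coe_injective.ne hab)⟩
  have hπ (a b : α) (h : (σ * swap x₁ x).SameCycle a b) (ha : a ≠ x) (hb : b ≠ x)
      (hab : a ≠ b) : ¬ a ≤ b :=
    (hτ ⟨a, ha⟩ ⟨b, hb⟩ ((sameCycle_permApplyEqEquiv_iff _).2 h) (by simpa using hab)).1
  refine hasAntichainCycles_of_forall fun a b h hab => ?_
  have h' := sameCycle_mul_swap_of_sameCycle hσ h
  by_cases hb : b = x
  · subst hb
    exact fun hle => hab (hx.eq_of_le hle)
  by_cases ha : a = x
  · subst ha
    rw [if_pos rfl, if_neg hb] at h'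
    have hbmin : IsMin b := by
      rcases eq_or_ne x₁ b with rfl | hb₁
      · exact hx₁
      rcases eq_or_ne x₁ a with rfl | hx₁a
      · exact absurd (h'.eq_of_left (by simp [Function.IsFixedPt, hσ])) hb₁
      · by_contra hmin
        exact hπ x₁ b h' hx₁a hb hb₁ (hdom b hmin).le
    exact fun hle => hab (hbmin.eq_of_le hle)
  · rw [if_neg ha, if_neg hb] at h'
    exact hπ a b h' ha hb hab

theorem card_hasAntichainCycles_fiber [DecidableEq α] (hx₁ : IsMin x₁)
    (hdom : ∀ z, ¬ IsMin z → x₁ < z) (hx : IsMin x) :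
    Nat.card {σ : {σ : Perm α // σ x₁ = x} // σ.1.HasAntichainCycles} =
      Nat.card {τ : Perm {y : α // y ≠ x} // τ.HasAntichainCycles} :=
  Nat.card_congr <| (permApplyEqEquiv x₁ x).subtypeEquiv fun σ =>
    (hasAntichainCycles_permApplyEqEquiv_iff hx₁ hdom hx σ).symm

end Antichain

end Equiv.Perm

open Equiv.Perm

universe u

theorem card_isLinearExtension_eq_card_hasAntichainCycles (n : ℕ) :
    ∀ (β : Type u) [Fintype β] [PartialOrder β], IsTTFree β → Fintype.card β = n →
      Nat.card {ω : Fin n ≃ β // IsLinearExtension ω} =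
        Nat.card {σ : Perm β // σ.HasAntichainCycles} := by
  induction n with
  | zero =>
    intro β _ _ _ hβ
    have : IsEmpty β := Fintype.card_eq_zero_iff.1 hβ
    rw [Nat.card_eq_one_iff_unique.2
        ⟨inferInstance, ⟨⟨(Fintype.equivFinOfCardEq hβ).symm, fun i => i.elim0⟩⟩⟩,
      Nat.card_eq_one_iff_unique.2 ⟨inferInstance, ⟨⟨1, fun a => isEmptyElim a⟩⟩⟩]
  | succ n ih =>
    intro β _ _ hfree hβ
    classical
    have : Nonempty β := Fintype.card_pos_iff.1 (hβ ▸ n.succ_pos)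
    obtain ⟨x₁, hx₁, hdom⟩ := hfree.exists_isMin_forall_lt
    rw [Nat.card_subtype_eq_sum_card_fiber _ fun ω : Fin (n + 1) ≃ β => ω 0,
      Nat.card_subtype_eq_sum_card_fiber _ fun σ : Perm β => σ x₁]
    refine Finset.sum_congr rfl fun x _ => ?_
    by_cases hx : IsMin x
    · rw [card_isLinearExtension_fiber hx, card_hasAntichainCycles_fiber hx₁ hdom hx]
      refine ih _ (hfree.of_orderEmbedding (OrderEmbedding.subtype _)) ?_
      rw [← add_left_inj 1, ← hβ, ← Fintype.card_option, Fintype.card_congr (optionSubtypeNe x)]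
    · have : IsEmpty {ω : {ω : Fin (n + 1) ≃ β // ω 0 = x} // IsLinearExtension ω.1} :=
        ⟨fun ω => hx (ω.1.2 ▸ ω.2.isMin_apply_zero)⟩
      have : IsEmpty {σ : {σ : Perm β // σ x₁ = x} // σ.1.HasAntichainCycles} :=
        ⟨fun σ => hx (σ.1.2 ▸ σ.2.isMin_apply hdom)⟩
      simp only [Nat.card_of_isEmpty]

/-- for a finite `(2+2)`-free poset `P`, the number of linear
extensions of `P` equals the number of permutations of the ground set all of whose
orbits (cycles) are antichains of `P`. -/
theorem stmt10 (β : Type*) [Fintype β] [PartialOrder β] (hfree : IsTTFree β) :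
    Nat.card {ω : Fin (Fintype.card β) ≃ β //
        ∀ i j : Fin (Fintype.card β), i < j → ¬ ω j ≤ ω i} =
      Nat.card {σ : Equiv.Perm β //
        ∀ x y : β, σ.SameCycle x y → x ≠ y → ¬ x ≤ y ∧ ¬ y ≤ x} :=
  card_isLinearExtension_eq_card_hasAntichainCycles _ β hfree rfl
end

section
/- For a partial order R on [N] and an R-listing ω, set χ(R, ω) = Σ_{J ∈ Comp(R,ω)} (−1)^{(N−1)−|J|}. Let P be a partial order on [m] and Q a partial order on [n], and let PQ be their ordinal sum on [m+n]. Then Σ_{ω a PQ-listing} χ(PQ, ω) = (Σ_{ω a P-listing} χ(P, ω)) · (Σ_{ω a Q-listing} χ(Q, ω)). In other words, the character ζ_1(P) = Σ_{ω ∈ Rev(P)} χ_{Comp(P,ω)} is multiplicative with respect to ordinal sum. -/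
/-- The ordinal sum `PQ` on `[m+n]` of `P` on `[m]` and `Q` on `[n]`. -/
def OrdSumLe (m n : ℕ) (leP : Fin m → Fin m → Prop) (leQ : Fin n → Fin n → Prop)
    (x y : Fin (m + n)) : Prop :=
  (∃ hx : (x : ℕ) < m, ∃ hy : (y : ℕ) < m, leP ⟨x, hx⟩ ⟨y, hy⟩) ∨
  (∃ _ : m ≤ (x : ℕ), ∃ _ : m ≤ (y : ℕ),
      leQ ⟨(x : ℕ) - m, by have := x.isLt; omega⟩ ⟨(y : ℕ) - m, by have := y.isLt; omega⟩) ∨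
  ((x : ℕ) < m ∧ m ≤ (y : ℕ))

instance (m n : ℕ) (leP : Fin m → Fin m → Prop) [DecidableRel leP]
    (leQ : Fin n → Fin n → Prop) [DecidableRel leQ] :
    DecidableRel (OrdSumLe m n leP leQ) := fun x y => by
  unfold OrdSumLe; infer_instance

/-!
Write `K` for the complement of a set of border points: then `χ(R, ω) = Σ_K (-1)^|K|`, where `K`
runs over the sets of links that glue `ω` into consecutive blocks without descents. Cutting off
the first block gives, for `ζ(s) = Σ_ω χ(R|s, ω)` and `e(t)` the number of linear extensions of
`R|t`, the recursion `ζ(s) = Σ_{∅ ≠ t ⊆ s} (-1)^(|t|-1) e(t) ζ(s \ t)`: `ζ` is the inverse of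
`g(t) = (-1)^|t| e(t)` under subset convolution. In an ordinal sum a linear extension of `a ∪ b`
(`a` in the lower part, `b` in the upper one) lists `a` before `b`, so `g(a ∪ b) = g(a) g(b)`; the
convolution inverse of such a product is the product of the inverses, whence
`ζ(PQ) = ζ(P) ζ(Q)`.
-/

open Finset

namespace Multiset

theorem lists_map {α β : Type*} (f : α → β) (m : Multiset α) :
    (m.map f).lists = m.lists.map (List.map f) := by
  induction m using Quotient.inductionOn with
  | h l => exact congrArg _ (List.map_permutations f l).symm

end Multiset

namespace Finset

variable {α β : Type*}

theorem powerset_map (f : β ↪ α) (s : Finset β) :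
    (s.map f).powerset = s.powerset.map ⟨Finset.map f, map_injective f⟩ := by
  ext t
  simp only [mem_powerset, mem_map, Function.Embedding.coeFn_mk, subset_map_iff]
  exact exists_congr fun u => and_congr_right fun _ => eq_comm

-- The sets `K` are grouped by their first gap `c + 1`, the least positive integer not in `K`.
theorem sum_powerset_Ico_eq_sum_firstGap {M : Type*} [AddCommMonoid M] (N : ℕ)
    (F : Finset ℕ → M) :
    ∑ K ∈ (Ico 1 (N + 1)).powerset, F K =
      ∑ c ∈ range (N + 1), ∑ K ∈ (Ico 1 (N - c)).powerset,
        F (Ico 1 (c + 1) ∪ K.map (addLeftEmbedding (c + 1))) := by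
  induction N generalizing F with
  | zero => simp
  | succ N ih =>
    have hIco : Ico 1 (N + 2) = insert 1 ((Ico 1 (N + 1)).map (addLeftEmbedding 1)) := by
      rw [map_add_left_Ico, insert_Ico_add_one_left_eq_Ico (by omega), add_comm 1 (N + 1)]
    have h1 : 1 ∉ (Ico 1 (N + 1)).map (addLeftEmbedding 1) := by simp
    simp only [hIco, sum_powerset_insert h1, powerset_map, sum_map, Function.Embedding.coeFn_mk]
    rw [ih fun K => F (insert 1 (K.map (addLeftEmbedding 1))), sum_range_succ' _ (N + 1), add_comm]
    congr 1
    · refine sum_congr rfl fun c hc => sum_congr (by simp) fun K _ => congrArg F ?_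
      ext k
      simp only [mem_insert, mem_map, mem_union, mem_Ico, addLeftEmbedding_apply]
      constructor
      · rintro (rfl | ⟨a, (h | ⟨b, hb, rfl⟩), rfl⟩)
        · omega
        · omega
        · exact Or.inr ⟨b, hb, by omega⟩
      · rintro (h | ⟨b, hb, rfl⟩)
        · rcases Nat.lt_or_ge k 2 with h' | h'
          · omega
          · exact Or.inr ⟨k - 1, Or.inl (by omega), by omega⟩
        · exact Or.inr ⟨c + 1 + b, Or.inr ⟨b, hb, rfl⟩, by omega⟩
    · simp

theorem sum_powerset_union {M : Type*} [AddCommMonoid M] [DecidableEq α] {u v : Finset α}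
    (huv : Disjoint u v) (F : Finset α → M) :
    ∑ t ∈ (u ∪ v).powerset, F t = ∑ x ∈ u.powerset, ∑ y ∈ v.powerset, F (x ∪ y) := by
  induction v using Finset.induction_on generalizing F with
  | empty => simp
  | insert a v hav ih =>
    have hau : a ∉ u ∪ v := by
      simpa [hav] using disjoint_right.1 huv (mem_insert_self a v)
    have huv' : Disjoint u v := huv.mono_right (subset_insert a v)
    rw [union_insert, sum_powerset_insert hau, ih huv', ih huv' fun t => F (insert a t),
      ← sum_add_distrib]
    refine sum_congr rfl fun x _ => ?_
    rw [sum_powerset_insert hav]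
    simp only [union_insert]

theorem eq_of_sum_powerset_mul_sdiff_eq {R : Type*} [Ring R] [DecidableEq α]
    {g Y₁ Y₂ : Finset α → R} (hg : g ∅ = 1) {U : Finset α}
    (h : ∀ s ⊆ U, ∑ t ∈ s.powerset, g t * Y₁ (s \ t) = ∑ t ∈ s.powerset, g t * Y₂ (s \ t)) :
    ∀ s ⊆ U, Y₁ s = Y₂ s := by
  intro s
  induction s using Finset.strongInduction with
  | H s ih =>
    intro hs
    have hrest : ∑ t ∈ s.powerset.erase ∅, g t * Y₁ (s \ t) =
        ∑ t ∈ s.powerset.erase ∅, g t * Y₂ (s \ t) := by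
      refine sum_congr rfl fun t ht => ?_
      obtain ⟨hne, hts⟩ := mem_erase.1 ht
      rw [ih (s \ t) (sdiff_ssubset (mem_powerset.1 hts) (nonempty_iff_ne_empty.2 hne))
        (sdiff_subset.trans hs)]
    have := h s hs
    rwa [← add_sum_erase _ _ (empty_mem_powerset s), ← add_sum_erase _ _ (empty_mem_powerset s),
      hrest, add_left_inj, hg, sdiff_empty, one_mul, one_mul] at this

end Finset

namespace PosetChi

variable {α β : Type*}

def orderings (s : Finset α) : Finset (List α) := ⟨s.val.lists, Multiset.lists_nodup_finset s⟩

theorem mem_orderings {s : Finset α} {w : List α} : w ∈ orderings s ↔ (w : Multiset α) = s.val :=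
  (Multiset.mem_lists_iff _ _).trans eq_comm

theorem length_of_mem_orderings {s : Finset α} {w : List α} (hw : w ∈ orderings s) :
    w.length = #s := by
  rw [card_def, ← mem_orderings.1 hw, Multiset.coe_card]

theorem nodup_of_mem_orderings {s : Finset α} {w : List α} (hw : w ∈ orderings s) : w.Nodup := by
  rw [← Multiset.coe_nodup, mem_orderings.1 hw]
  exact s.nodup

theorem mem_of_mem_orderings {s : Finset α} {w : List α} (hw : w ∈ orderings s) {x : α} :
    x ∈ w ↔ x ∈ s := by
  rw [← Multiset.mem_coe, mem_orderings.1 hw, mem_val]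

theorem orderings_empty : orderings (∅ : Finset α) = {[]} := by
  ext w
  simp [mem_orderings]

theorem orderings_map (f : α ↪ β) (s : Finset α) :
    orderings (s.map f) = (orderings s).map ⟨List.map f, List.map_injective_iff.2 f.injective⟩ :=
  Finset.val_injective (Multiset.lists_map f s.val)

theorem toFinset_of_mem_orderings [DecidableEq α] {s : Finset α} {w : List α}
    (hw : w ∈ orderings s) : w.toFinset = s := by
  ext x
  rw [List.mem_toFinset, mem_of_mem_orderings hw]

theorem mem_orderings_toFinset [DecidableEq α] {w : List α} (hw : w.Nodup) :
    w ∈ orderings w.toFinset := by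
  rw [mem_orderings, List.toFinset_val, hw.dedup]

theorem sum_orderings_take_drop {M : Type*} [AddCommMonoid M] [DecidableEq α] (s : Finset α)
    {c : ℕ} (hc : c ≤ #s) (F : List α → List α → M) :
    ∑ w ∈ orderings s, F (w.take c) (w.drop c) =
      ∑ t ∈ s.powersetCard c, ∑ w₁ ∈ orderings t, ∑ w₂ ∈ orderings (s \ t), F w₁ w₂ := by
  rw [sum_congr rfl fun t _ => (sum_product' _ _ fun w₁ w₂ => F w₁ w₂).symm, sum_sigma']
  apply sum_nbij' (fun w => ⟨(w.take c).toFinset, (w.take c, w.drop c)⟩)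
    (fun q => q.2.1 ++ q.2.2)
  · intro w hw
    have hnd : (w.take c).Nodup := (nodup_of_mem_orderings hw).sublist (List.take_sublist c w)
    have hlen : (w.take c).length = c := by simp [length_of_mem_orderings hw, hc]
    simp only [mem_sigma, mem_product, mem_powersetCard]
    refine ⟨⟨fun x hx => ?_, by rw [List.toFinset_card_of_nodup hnd, hlen]⟩,
      mem_orderings_toFinset hnd, ?_⟩
    · exact (mem_of_mem_orderings hw).1 (List.mem_of_mem_take (List.mem_toFinset.1 hx))
    · rw [mem_orderings, sdiff_val, ← mem_orderings.1 hw, List.toFinset_val, hnd.dedup,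
        ← List.take_append_drop c w, ← Multiset.coe_add, List.take_append_drop,
        add_tsub_cancel_left]
  · rintro ⟨t, w₁, w₂⟩ hq
    simp only [mem_sigma, mem_product, mem_powersetCard] at hq
    obtain ⟨⟨hts, -⟩, hw₁, hw₂⟩ := hq
    rw [mem_orderings, ← Multiset.coe_add, mem_orderings.1 hw₁, mem_orderings.1 hw₂,
      sdiff_val, add_tsub_cancel_of_le (val_le_iff.2 hts)]
  · intro w _
    simp
  · rintro ⟨t, w₁, w₂⟩ hq
    simp only [mem_sigma, mem_product, mem_powersetCard] at hq
    obtain ⟨⟨-, htc⟩, hw₁, -⟩ := hq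
    have hlen : w₁.length = c := by rw [length_of_mem_orderings hw₁, htc]
    simp [List.take_left' hlen, List.drop_left' hlen, toFinset_of_mem_orderings hw₁]
  · intro w _
    rfl

variable (r : α → α → Prop)

/-- `k ∈ K` links the positions `k - 1` and `k` of `w` into one block: `K` is the complement of a
set of border points, and every block must be free of descents. -/
def AdmissibleLinks (w : List α) (K : Finset ℕ) : Prop :=
  ∀ j (hj : j < w.length) i (hij : i < j), Ioc i j ⊆ K → ¬ r w[j] w[i]

theorem admissibleLinks_append {w₁ w₂ : List α} {K : Finset ℕ} (hK : 0 ∉ K) :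
    AdmissibleLinks r (w₁ ++ w₂) (Ico 1 w₁.length ∪ K.map (addLeftEmbedding w₁.length)) ↔
      w₁.Pairwise (fun x y => ¬ r y x) ∧ AdmissibleLinks r w₂ K := by
  set c := w₁.length
  have hmem : ∀ k, k ∈ Ico 1 c ∪ K.map (addLeftEmbedding c) ↔
      (1 ≤ k ∧ k < c) ∨ (c ≤ k ∧ k - c ∈ K) := by
    intro k
    simp only [mem_union, mem_Ico, mem_map, addLeftEmbedding_apply]
    constructor
    · rintro (h | ⟨a, ha, rfl⟩)
      · exact Or.inl h
      · exact Or.inr ⟨by omega, by simpa using ha⟩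
    · rintro (h | ⟨h, ha⟩)
      · exact Or.inl h
      · exact Or.inr ⟨k - c, ha, by omega⟩
  constructor
  · intro h
    refine ⟨List.pairwise_iff_getElem.2 fun i j hi hj hij => ?_, fun j hj i hij hsub => ?_⟩
    · have := h j (by simp; omega) i hij fun k hk => (hmem k).2 (Or.inl (by simp at hk; omega))
      rwa [List.getElem_append_left hj, List.getElem_append_left hi] at this
    · have := h (c + j) (by simp; omega) (c + i) (by omega) fun k hk => by
        simp only [mem_Ioc] at hk
        exact (hmem k).2 (Or.inr ⟨by omega, hsub (by simp; omega)⟩)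
      simpa [List.getElem_append_right, c] using this
  · rintro ⟨h₁, h₂⟩ j hj i hij hsub
    rcases lt_or_ge j c with hjc | hjc
    · rw [List.getElem_append_left hjc, List.getElem_append_left (by omega)]
      exact List.pairwise_iff_getElem.1 h₁ i j _ _ hij
    rcases lt_or_ge i c with hic | hic
    · have := (hmem c).1 (hsub (by simp; omega))
      simp at this
      exact absurd this hK
    · rw [List.getElem_append_right hjc, List.getElem_append_right hic]
      refine h₂ (j - c) (by simp at hj; omega) (i - c) (by omega) fun k hk => ?_
      simp only [mem_Ioc] at hk
      have := (hmem (k + c)).1 (hsub (by simp; omega))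
      rcases this with h | h
      · omega
      · simpa using h.2

theorem disjoint_of_forall_rel_not_rel {a b : Finset α} (hab : ∀ x ∈ a, ∀ y ∈ b, r x y ∧ ¬ r y x) :
    Disjoint a b :=
  disjoint_left.2 fun x hxa hxb => (hab x hxa x hxb).2 (hab x hxa x hxb).1

variable [DecidableRel r]

instance (w : List α) (K : Finset ℕ) : Decidable (AdmissibleLinks r w K) := by
  unfold AdmissibleLinks; infer_instance

def chi (w : List α) : ℤ :=
  ∑ K ∈ (Ico 1 w.length).powerset with AdmissibleLinks r w K, (-1) ^ #K

theorem chi_eq_sum_take_drop {w : List α} (hw : w ≠ []) :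
    chi r w = ∑ c ∈ range w.length,
      if (w.take (c + 1)).Pairwise (fun x y => ¬ r y x) then
        (-1) ^ c * chi r (w.drop (c + 1)) else 0 := by
  obtain ⟨N, hN⟩ : ∃ N, w.length = N + 1 := Nat.exists_eq_add_one.2 (List.length_pos_iff.2 hw)
  rw [chi, sum_filter, hN, sum_powerset_Ico_eq_sum_firstGap]
  refine sum_congr rfl fun c hc => ?_
  have hc : c < N + 1 := mem_range.1 hc
  have hlen : (w.take (c + 1)).length = c + 1 := by simp; omega
  have hdrop : (w.drop (c + 1)).length = N - c := by simp; omega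
  have hsplit : ∀ K ∈ (Ico 1 (N - c)).powerset,
      AdmissibleLinks r w (Ico 1 (c + 1) ∪ K.map (addLeftEmbedding (c + 1))) ↔
        (w.take (c + 1)).Pairwise (fun x y => ¬ r y x) ∧ AdmissibleLinks r (w.drop (c + 1)) K := by
    intro K hK
    have h0 : 0 ∉ K := fun h => by simpa using mem_powerset.1 hK h
    simpa [hlen] using admissibleLinks_append r (w₁ := w.take (c + 1)) (w₂ := w.drop (c + 1)) h0
  have hcard : ∀ K : Finset ℕ, #(Ico 1 (c + 1) ∪ K.map (addLeftEmbedding (c + 1))) = c + #K := by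
    intro K
    rw [card_union_of_disjoint, card_map, Nat.card_Ico, Nat.add_sub_cancel]
    refine disjoint_left.2 fun k hk hk' => ?_
    simp only [mem_Ico, mem_map, addLeftEmbedding_apply] at hk hk'
    omega
  rw [chi, sum_filter, hdrop, mul_sum]
  split_ifs with hgood
  · refine sum_congr rfl fun K hK => ?_
    simp only [hsplit K hK, hgood, true_and, hcard, pow_add]
    split_ifs <;> simp
  · exact sum_eq_zero fun K hK => by simp [hsplit K hK, hgood]

def linExtCount (s : Finset α) : ℕ := #{w ∈ orderings s | w.Pairwise fun x y => ¬ r y x}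

def zeta (s : Finset α) : ℤ := ∑ w ∈ orderings s, chi r w

theorem linExtCount_empty : linExtCount r (∅ : Finset α) = 1 := by
  simp [linExtCount, orderings_empty, filter_singleton]

theorem zeta_empty : zeta r (∅ : Finset α) = 1 := by
  simp [zeta, orderings_empty, chi, filter_singleton, AdmissibleLinks]

theorem zeta_eq_sum_powersetCard [DecidableEq α] {s : Finset α} (hs : s.Nonempty) :
    zeta r s = ∑ c ∈ range #s, ∑ t ∈ s.powersetCard (c + 1),
      (-1) ^ c * linExtCount r t * zeta r (s \ t) := by
  calc zeta r s
      = ∑ w ∈ orderings s, ∑ c ∈ range #s, if (w.take (c + 1)).Pairwise (fun x y => ¬ r y x)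
          then (-1) ^ c * chi r (w.drop (c + 1)) else 0 := by
        refine sum_congr rfl fun w hw => ?_
        have hlen := length_of_mem_orderings hw
        rw [chi_eq_sum_take_drop r (List.ne_nil_of_length_pos (hlen ▸ hs.card_pos)), hlen]
    _ = ∑ c ∈ range #s, ∑ t ∈ s.powersetCard (c + 1), ∑ w₁ ∈ orderings t,
          ∑ w₂ ∈ orderings (s \ t), if w₁.Pairwise (fun x y => ¬ r y x)
            then (-1) ^ c * chi r w₂ else 0 := by
        rw [sum_comm]
        exact sum_congr rfl fun c hc =>
          sum_orderings_take_drop s (mem_range.1 hc) fun w₁ w₂ =>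
            if w₁.Pairwise (fun x y => ¬ r y x) then (-1) ^ c * chi r w₂ else (0 : ℤ)
    _ = _ := by
        refine sum_congr rfl fun c _ => sum_congr rfl fun t _ => ?_
        rw [zeta, linExtCount, card_filter, Nat.cast_sum, mul_sum (orderings t), sum_mul_sum]
        refine sum_congr rfl fun w₁ _ => sum_congr rfl fun w₂ _ => ?_
        split_ifs <;> simp

def signedLinExtCount (s : Finset α) : ℤ := (-1) ^ #s * linExtCount r s

theorem sum_powerset_signedLinExtCount_mul_zeta_sdiff [DecidableEq α] (s : Finset α) :
    ∑ t ∈ s.powerset, signedLinExtCount r t * zeta r (s \ t) = if s = ∅ then 1 else 0 := by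
  rcases s.eq_empty_or_nonempty with rfl | hs
  · simp [signedLinExtCount, linExtCount_empty, zeta_empty]
  simp only [signedLinExtCount]
  rw [if_neg hs.ne_empty, sum_powerset, sum_range_succ', powersetCard_zero, sum_singleton,
    card_empty, sdiff_empty, linExtCount_empty, zeta_eq_sum_powersetCard r hs, pow_zero,
    Nat.cast_one, one_mul, one_mul, ← sum_add_distrib]
  refine sum_eq_zero fun c _ => ?_
  rw [← sum_add_distrib]
  refine sum_eq_zero fun t ht => ?_
  rw [(mem_powersetCard.1 ht).2, pow_succ]
  ring

theorem linExtCount_union [DecidableEq α] {a b : Finset α}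
    (hab : ∀ x ∈ a, ∀ y ∈ b, r x y ∧ ¬ r y x) :
    linExtCount r (a ∪ b) = linExtCount r a * linExtCount r b := by
  have hdisj := disjoint_of_forall_rel_not_rel r hab
  have hasc : ∀ {t u : Finset α} {w₁ w₂ : List α}, w₁ ∈ orderings t → w₂ ∈ orderings u →
      ((w₁ ++ w₂).Pairwise (fun x y => ¬ r y x) ↔ w₁.Pairwise (fun x y => ¬ r y x) ∧
        w₂.Pairwise (fun x y => ¬ r y x) ∧ ∀ x ∈ t, ∀ y ∈ u, ¬ r y x) := by
    intro t u w₁ w₂ h₁ h₂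
    simp only [List.pairwise_append, mem_of_mem_orderings h₁, mem_of_mem_orderings h₂]
  simp only [linExtCount, card_filter]
  calc ∑ w ∈ orderings (a ∪ b), (if w.Pairwise (fun x y => ¬ r y x) then 1 else 0)
      = ∑ w ∈ orderings (a ∪ b),
          if (w.take #a ++ w.drop #a).Pairwise (fun x y => ¬ r y x) then 1 else 0 := by
        simp only [List.take_append_drop]
    _ = ∑ t ∈ (a ∪ b).powersetCard #a, ∑ w₁ ∈ orderings t, ∑ w₂ ∈ orderings ((a ∪ b) \ t),
          if (w₁ ++ w₂).Pairwise (fun x y => ¬ r y x) then 1 else 0 :=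
        sum_orderings_take_drop _ (card_le_card subset_union_left) fun w₁ w₂ =>
          if (w₁ ++ w₂).Pairwise (fun x y => ¬ r y x) then 1 else 0
    _ = ∑ w₁ ∈ orderings a, ∑ w₂ ∈ orderings b,
          if (w₁ ++ w₂).Pairwise (fun x y => ¬ r y x) then 1 else 0 := by
        rw [sum_eq_single_of_mem a (mem_powersetCard.2 ⟨subset_union_left, rfl⟩),
          union_sdiff_cancel_left hdisj]
        intro t ht hta
        obtain ⟨hts, htc⟩ := mem_powersetCard.1 ht
        -- a subset of `a ∪ b` of size `#a` other than `a` puts an element of `b` before one of `a`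
        obtain ⟨x, hxt, hxa⟩ := not_subset.1 fun h => hta (eq_of_subset_of_card_le h htc.ge)
        obtain ⟨y, hya, hyt⟩ := not_subset.1 fun h => hta (eq_of_subset_of_card_le h htc.le).symm
        have hxb : x ∈ b := (mem_union.1 (hts hxt)).resolve_left hxa
        refine sum_eq_zero fun w₁ h₁ => sum_eq_zero fun w₂ h₂ => if_neg fun h => ?_
        exact ((hasc h₁ h₂).1 h).2.2 x hxt y (mem_sdiff.2 ⟨mem_union_left _ hya, hyt⟩)
          (hab y hya x hxb).1
    _ = _ := by
        rw [sum_mul_sum]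
        refine sum_congr rfl fun w₁ h₁ => sum_congr rfl fun w₂ h₂ => ?_
        rw [ite_zero_mul_ite_zero, mul_one]
        refine if_congr ((hasc h₁ h₂).trans ⟨fun h => ⟨h.1, h.2.1⟩, fun h => ?_⟩) rfl rfl
        exact ⟨h.1, h.2, fun x hx y hy => (hab x hx y hy).2⟩

theorem signedLinExtCount_union [DecidableEq α] {a b : Finset α}
    (hab : ∀ x ∈ a, ∀ y ∈ b, r x y ∧ ¬ r y x) :
    signedLinExtCount r (a ∪ b) = signedLinExtCount r a * signedLinExtCount r b := by
  rw [signedLinExtCount, card_union_of_disjoint (disjoint_of_forall_rel_not_rel r hab),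
    linExtCount_union r hab, pow_add, Nat.cast_mul, signedLinExtCount, signedLinExtCount]
  ring

theorem sum_powerset_signedLinExtCount_mul_zeta_inter_mul_zeta_sdiff [DecidableEq α]
    {a b s : Finset α} (hab : ∀ x ∈ a, ∀ y ∈ b, r x y ∧ ¬ r y x) (hs : s ⊆ a ∪ b) :
    ∑ t ∈ s.powerset, signedLinExtCount r t * (zeta r ((s \ t) ∩ a) * zeta r ((s \ t) \ a)) =
      if s = ∅ then 1 else 0 := by
  have hsplit : s = (s ∩ a) ∪ (s \ a) := by rw [union_comm, sdiff_union_inter]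
  have hempty : s ∩ a = ∅ ∧ s \ a = ∅ ↔ s = ∅ := by rw [← union_eq_empty, ← hsplit]
  have hsa : s \ a ⊆ b := fun z hz =>
    (mem_union.1 (hs (mem_sdiff.1 hz).1)).resolve_left (mem_sdiff.1 hz).2
  rw [show s.powerset = ((s ∩ a) ∪ (s \ a)).powerset by rw [← hsplit],
    sum_powerset_union (disjoint_sdiff_inter s a).symm]
  calc ∑ x ∈ (s ∩ a).powerset, ∑ y ∈ (s \ a).powerset, signedLinExtCount r (x ∪ y) *
        (zeta r ((s \ (x ∪ y)) ∩ a) * zeta r ((s \ (x ∪ y)) \ a))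
      = (∑ x ∈ (s ∩ a).powerset, signedLinExtCount r x * zeta r ((s ∩ a) \ x)) *
          ∑ y ∈ (s \ a).powerset, signedLinExtCount r y * zeta r ((s \ a) \ y) := by
        rw [sum_mul_sum]
        refine sum_congr rfl fun x hx => sum_congr rfl fun y hy => ?_
        have hx := mem_powerset.1 hx
        have hy := mem_powerset.1 hy
        have h₁ : (s \ (x ∪ y)) ∩ a = (s ∩ a) \ x := by grind
        have h₂ : (s \ (x ∪ y)) \ a = (s \ a) \ y := by grind
        rw [signedLinExtCount_union r fun u hu v hv =>
          hab u (mem_inter.1 (hx hu)).2 v (hsa (hy hv)), h₁, h₂]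
        ring
    _ = if s = ∅ then 1 else 0 := by
        simp only [sum_powerset_signedLinExtCount_mul_zeta_sdiff, ite_zero_mul_ite_zero, mul_one,
          hempty]

-- `zeta r` and `s ↦ zeta r (s ∩ a) * zeta r (s \ a)` are both convolution inverses of
-- `signedLinExtCount r` on the subsets of `a ∪ b`.
theorem zeta_union [DecidableEq α] {a b : Finset α} (hab : ∀ x ∈ a, ∀ y ∈ b, r x y ∧ ¬ r y x) :
    zeta r (a ∪ b) = zeta r a * zeta r b := by
  have key := eq_of_sum_powerset_mul_sdiff_eq (Y₁ := zeta r)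
    (Y₂ := fun s => zeta r (s ∩ a) * zeta r (s \ a))
    (by simp [signedLinExtCount, linExtCount_empty]) (U := a ∪ b)
    (fun s hs => (sum_powerset_signedLinExtCount_mul_zeta_sdiff r s).trans
      (sum_powerset_signedLinExtCount_mul_zeta_inter_mul_zeta_sdiff r hab hs).symm)
    (a ∪ b) subset_rfl
  rwa [union_inter_cancel_left, union_sdiff_cancel_left (disjoint_of_forall_rel_not_rel r hab)]
    at key

theorem chi_map {r' : β → β → Prop} [DecidableRel r'] (f : r ↪r r') (w : List α) :
    chi r' (w.map f) = chi r w := by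
  simp only [chi, List.length_map]
  refine sum_congr (filter_congr fun K _ => ?_) fun _ _ => rfl
  simp only [AdmissibleLinks, List.getElem_map, f.map_rel_iff, List.length_map]

theorem zeta_map {r' : β → β → Prop} [DecidableRel r'] (f : r ↪r r') (s : Finset α) :
    zeta r' (s.map f.toEmbedding) = zeta r s := by
  rw [zeta, orderings_map, sum_map]
  exact sum_congr rfl fun w _ => chi_map r f w

theorem isBorderSet_iff_admissibleLinks {N : ℕ} (le : Fin N → Fin N → Prop)
    (ω : Equiv.Perm (Fin N)) {J : Finset ℕ} (hJ : J ⊆ Ico 1 N) :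
    IsBorderSet N le ω J ↔ AdmissibleLinks le (List.ofFn ω) (Ico 1 N \ J) := by
  rw [IsBorderSet, and_iff_right hJ]
  constructor
  · intro h j hj i hij hsub
    simp only [List.getElem_ofFn]
    exact h ⟨i, by simp at hj; omega⟩ ⟨j, by simpa using hj⟩ hij
      fun s hs hsij => (mem_sdiff.1 (hsub (mem_Ioc.2 hsij))).2 hs
  · intro h i j hij hJij
    have := h j (by simp) i hij fun k hk =>
      mem_sdiff.2 ⟨by simp at hk ⊢; omega, fun hkJ => hJij k hkJ (mem_Ioc.1 hk)⟩
    simpa using this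

theorem sum_compSet_eq_chi {N : ℕ} (le : Fin N → Fin N → Prop) [DecidableRel le]
    (ω : Equiv.Perm (Fin N)) :
    ∑ J ∈ CompSet N le ω, (-1 : ℤ) ^ ((N - 1) - #J) = chi le (List.ofFn ω) := by
  rw [chi, List.length_ofFn]
  apply sum_nbij' (fun J => Ico 1 N \ J) (fun K => Ico 1 N \ K)
  · intro J hJ
    simp only [CompSet, mem_filter, mem_powerset] at hJ ⊢
    exact ⟨sdiff_subset, (isBorderSet_iff_admissibleLinks le ω hJ.1).1 hJ.2⟩
  · intro K hK
    simp only [CompSet, mem_filter, mem_powerset] at hK ⊢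
    rw [isBorderSet_iff_admissibleLinks le ω sdiff_subset, Finset.sdiff_sdiff_eq_self hK.1]
    exact ⟨sdiff_subset, hK.2⟩
  · intro J hJ
    exact Finset.sdiff_sdiff_eq_self (mem_powerset.1 (mem_filter.1 hJ).1)
  · intro K hK
    exact Finset.sdiff_sdiff_eq_self (mem_powerset.1 (mem_filter.1 hK).1)
  · intro J hJ
    rw [card_sdiff_of_subset (mem_powerset.1 (mem_filter.1 hJ).1), Nat.card_Ico]

theorem sum_perm_ofFn_eq_sum_orderings {M : Type*} [AddCommMonoid M] {N : ℕ}
    (F : List (Fin N) → M) :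
    ∑ ω : Equiv.Perm (Fin N), F (List.ofFn ω) = ∑ w ∈ orderings univ, F w := by
  refine sum_bij (fun ω _ => List.ofFn ω) (fun ω _ => ?_) (fun ω₁ _ ω₂ _ h => ?_)
    (fun w hw => ?_) fun _ _ => rfl
  · have htoFinset : (List.ofFn ω).toFinset = univ :=
      eq_univ_of_forall fun x => List.mem_toFinset.2 (List.mem_ofFn.2 (ω.surjective x))
    simpa [htoFinset] using mem_orderings_toFinset (List.nodup_ofFn.2 ω.injective)
  · exact Equiv.coe_fn_injective (List.ofFn_injective h)
  · have hlen : w.length = N := by simpa using length_of_mem_orderings hw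
    refine ⟨(finCongr hlen.symm).trans ((nodup_of_mem_orderings hw).getEquivOfForallMemList w
      fun x => (mem_of_mem_orderings hw).2 (mem_univ x)), mem_univ _, ?_⟩
    apply List.ext_getElem (by simp [hlen])
    intro k _ _
    simp [List.Nodup.getEquivOfForallMemList]

theorem sum_perm_sum_compSet_eq_zeta {N : ℕ} (le : Fin N → Fin N → Prop) [DecidableRel le] :
    ∑ ω : Equiv.Perm (Fin N), ∑ J ∈ CompSet N le ω, (-1 : ℤ) ^ ((N - 1) - #J) = zeta le univ := by
  simp only [sum_compSet_eq_chi]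
  exact sum_perm_ofFn_eq_sum_orderings (chi le)

end PosetChi

open PosetChi

section OrdSum

variable {m n : ℕ} (leP : Fin m → Fin m → Prop) (leQ : Fin n → Fin n → Prop)

def OrdSumLe.castAddEmbedding : leP ↪r OrdSumLe m n leP leQ where
  toEmbedding := Fin.castAddEmb n
  map_rel_iff' {x y} := by simp [OrdSumLe]

def OrdSumLe.natAddEmbedding : leQ ↪r OrdSumLe m n leP leQ where
  toEmbedding := Fin.natAddEmb m
  map_rel_iff' {x y} := by simp [OrdSumLe]

theorem Fin.univ_add_eq_union :
    (univ : Finset (Fin (m + n))) =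
      (univ : Finset (Fin m)).map (Fin.castAddEmb n) ∪
        (univ : Finset (Fin n)).map (Fin.natAddEmb m) :=
  (eq_univ_of_forall fun z => Fin.addCases (fun i => by simp) (fun i => by simp) z).symm

theorem OrdSumLe.castAdd_lt_natAdd :
    ∀ x ∈ (univ : Finset (Fin m)).map (Fin.castAddEmb n),
      ∀ y ∈ (univ : Finset (Fin n)).map (Fin.natAddEmb m),
      OrdSumLe m n leP leQ x y ∧ ¬ OrdSumLe m n leP leQ y x := by
  simp [OrdSumLe]

end OrdSum

theorem stmt11_general (m n : ℕ)
    (leP : Fin m → Fin m → Prop) [DecidableRel leP]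
    (leQ : Fin n → Fin n → Prop) [DecidableRel leQ] :
    (∑ ω : Equiv.Perm (Fin (m + n)),
        ∑ J ∈ CompSet (m + n) (OrdSumLe m n leP leQ) ω,
          (-1 : ℤ) ^ ((m + n - 1) - J.card)) =
      (∑ ω : Equiv.Perm (Fin m),
          ∑ J ∈ CompSet m leP ω, (-1 : ℤ) ^ ((m - 1) - J.card)) *
        (∑ ω : Equiv.Perm (Fin n),
          ∑ J ∈ CompSet n leQ ω, (-1 : ℤ) ^ ((n - 1) - J.card)) := by
  rw [sum_perm_sum_compSet_eq_zeta, sum_perm_sum_compSet_eq_zeta, sum_perm_sum_compSet_eq_zeta,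
    Fin.univ_add_eq_union, zeta_union _ (OrdSumLe.castAdd_lt_natAdd leP leQ)]
  exact congrArg₂ (· * ·) (zeta_map _ (OrdSumLe.castAddEmbedding leP leQ) univ)
    (zeta_map _ (OrdSumLe.natAddEmbedding leP leQ) univ)

/-- the character `ζ₁(P) = Σ_ω χ(P, ω)`, where
`χ(R, ω) = Σ_{J ∈ Comp(R,ω)} (−1)^{(N−1)−|J|}`, is multiplicative with respect to
the ordinal sum of posets. -/
theorem stmt11 (m n : ℕ)
    (leP : Fin m → Fin m → Prop) [DecidableRel leP] (hP : IsPartialOrder (Fin m) leP)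
    (leQ : Fin n → Fin n → Prop) [DecidableRel leQ] (hQ : IsPartialOrder (Fin n) leQ) :
    (∑ ω : Equiv.Perm (Fin (m + n)),
        ∑ J ∈ CompSet (m + n) (OrdSumLe m n leP leQ) ω,
          (-1 : ℤ) ^ ((m + n - 1) - J.card)) =
      (∑ ω : Equiv.Perm (Fin m),
          ∑ J ∈ CompSet m leP ω, (-1 : ℤ) ^ ((m - 1) - J.card)) *
        (∑ ω : Equiv.Perm (Fin n),
          ∑ J ∈ CompSet n leQ ω, (-1 : ℤ) ^ ((n - 1) - J.card)) :=
  stmt11_general m n leP leQ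
end

section
/- Let P be a partial order on [m] and Q a partial order on [n] with m, n ≥ 1, let PQ be their ordinal sum on [m+n], and let ω ∈ Rev(PQ) be a PQ-reversing listing. Then ω_i ∈ {m+1, …, m+n} for all 1 ≤ i ≤ n and ω_i ∈ [m] for all n < i ≤ m+n; moreover every set of border points S ∈ Comp(PQ, ω) contains n. -/
/-- `ω` is `P`-reversing: `Comp(P, ω)` is a complete plucking, i.e. every
`i ∈ [n-1]` belongs to some inclusion-minimal set of border points of `ω`. -/
def IsReversing (n : ℕ) (le : Fin n → Fin n → Prop) (ω : Equiv.Perm (Fin n)) : Prop :=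
  ∀ i ∈ Finset.Ico 1 n, ∃ M : Finset ℕ, IsBorderSet n le ω M ∧
    (∀ M' : Finset ℕ, IsBorderSet n le ω M' → M' ⊆ M → M' = M) ∧ i ∈ M

/-- From reversing: each boundary `q` lies in an inversion interval `(a,b]`
such that any inversion sub-interval of `(a,b]` also contains `q`. -/
lemma extract_key (m n : ℕ) (leP : Fin m → Fin m → Prop) (leQ : Fin n → Fin n → Prop)
    (ω : Equiv.Perm (Fin (m + n)))
    (hrev : IsReversing (m + n) (OrdSumLe m n leP leQ) ω)
    (q : ℕ) (hq1 : 1 ≤ q) (hq2 : q < m + n) :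
    ∃ a b : Fin (m + n), a < b ∧ OrdSumLe m n leP leQ (ω b) (ω a) ∧
      (a : ℕ) < q ∧ q ≤ (b : ℕ) ∧
      ∀ c d : Fin (m + n), c < d → OrdSumLe m n leP leQ (ω d) (ω c) →
        (a : ℕ) ≤ (c : ℕ) → (d : ℕ) ≤ (b : ℕ) → ((c : ℕ) < q ∧ q ≤ (d : ℕ)) := by
  obtain ⟨M, hM, hmin, hqM⟩ := hrev q (Finset.mem_Ico.mpr ⟨hq1, hq2⟩)
  have hsub : M.erase q ⊆ M := Finset.erase_subset _ _
  have hne : M.erase q ≠ M := by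
    intro h
    exact (h ▸ Finset.notMem_erase q M) hqM
  have hnb : ¬ IsBorderSet (m + n) (OrdSumLe m n leP leQ) ω (M.erase q) := fun h =>
    hne (hmin _ h hsub)
  rw [IsBorderSet] at hnb
  push_neg at hnb
  obtain ⟨a, b, hab, hmiss, hinv⟩ := hnb (hsub.trans hM.1)
  have hit : ∀ c d : Fin (m + n), c < d → OrdSumLe m n leP leQ (ω d) (ω c) →
      ∃ s ∈ M, (c : ℕ) < s ∧ s ≤ (d : ℕ) := by
    intro c d hcd hl
    by_contra hc
    push_neg at hc
    exact hM.2 c d hcd (fun s hs hx => by have := hc s hs hx.1; omega) hl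
  have only_q : ∀ s ∈ M, (a : ℕ) < s → s ≤ (b : ℕ) → s = q := by
    intro s hs h1 h2
    by_contra hne'
    have := hmiss s (Finset.mem_erase.mpr ⟨hne', hs⟩) h1
    omega
  obtain ⟨s, hsM, hs1, hs2⟩ := hit a b hab hinv
  have hsq := only_q s hsM hs1 hs2
  refine ⟨a, b, hab, hinv, by omega, by omega, ?_⟩
  intro c d hcd hl hac hdb
  obtain ⟨t, htM, ht1, ht2⟩ := hit c d hcd hl
  have htq := only_q t htM (lt_of_le_of_lt hac ht1) (ht2.trans hdb)
  omega

/-- No "bad pair": a `P`-value never appears before a `Q`-value. -/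
lemma no_bad_pair (m n : ℕ) (leP : Fin m → Fin m → Prop) (leQ : Fin n → Fin n → Prop)
    (ω : Equiv.Perm (Fin (m + n)))
    (hrev : IsReversing (m + n) (OrdSumLe m n leP leQ) ω) :
    ¬ ∃ p q : Fin (m + n), p < q ∧ (ω p : ℕ) < m ∧ m ≤ (ω q : ℕ) := by
  classical
  rintro ⟨p0, q0, h1, h2, h3⟩
  have hdec : DecidablePred (fun k : ℕ =>
      ∃ h : k < m + n, m ≤ (ω ⟨k, h⟩ : ℕ) ∧
        ∃ p : Fin (m + n), (p : ℕ) < k ∧ (ω p : ℕ) < m) := fun _ => Classical.dec _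
  have hex : ∃ k : ℕ, ∃ h : k < m + n, m ≤ (ω ⟨k, h⟩ : ℕ) ∧
      ∃ p : Fin (m + n), (p : ℕ) < k ∧ (ω p : ℕ) < m :=
    ⟨(q0 : ℕ), q0.isLt, by simpa using h3, p0, h1, h2⟩
  have hpack : ∃ q : ℕ, ∃ hlt : q < m + n, m ≤ (ω ⟨q, hlt⟩ : ℕ) ∧
      (∃ p : Fin (m + n), (p : ℕ) < q ∧ (ω p : ℕ) < m) ∧
      ∀ k : ℕ, (∃ h : k < m + n, m ≤ (ω ⟨k, h⟩ : ℕ) ∧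
        ∃ p : Fin (m + n), (p : ℕ) < k ∧ (ω p : ℕ) < m) → Nat.find hex ≤ k ∧
        q = Nat.find hex := by
    obtain ⟨h1', h2', h3'⟩ := Nat.find_spec hex
    exact ⟨Nat.find hex, h1', h2', h3', fun k hk => ⟨Nat.find_min' hex hk, rfl⟩⟩
  obtain ⟨q, hq2, hωq, ⟨p, hpq, hωp⟩, hleast⟩ := hpack
  have hq1 : 1 ≤ q := by omega
  -- the entry just before position q is a P-value
  have hprev : (ω ⟨q - 1, by omega⟩ : ℕ) < m := by
    by_contra hc
    push_neg at hc
    have hplt : (p : ℕ) < q - 1 := by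
      rcases Nat.lt_or_ge (p : ℕ) (q - 1) with h | h
      · exact h
      · exfalso
        have hpv : (p : ℕ) = q - 1 := by omega
        have : p = (⟨q - 1, by omega⟩ : Fin (m + n)) := Fin.ext hpv
        rw [this] at hωp
        omega
    have hk := hleast (q - 1) ⟨by omega, hc, p, hplt, hωp⟩
    have hk2 := (hleast q ⟨hq2, hωq, p, hpq, hωp⟩).2
    omega
  obtain ⟨a, b, hab, hinv, haq, hqb, hkey⟩ :=
    extract_key m n leP leQ ω hrev q hq1 hq2
  have hωb_or : (ω b : ℕ) < m ∨ m ≤ (ω a : ℕ) := by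
    rcases hinv with ⟨hx, _, _⟩ | ⟨_, hy, _⟩ | ⟨hx, _⟩
    · exact Or.inl hx
    · exact Or.inr hy
    · exact Or.inl hx
  rcases hωb_or with hbm | ham
  · -- cross/P case: use the interval (q, b]
    have hqb' : q < (b : ℕ) := by
      rcases Nat.lt_or_ge q (b : ℕ) with h | h
      · exact h
      · exfalso
        have hbq : b = (⟨q, hq2⟩ : Fin (m + n)) := Fin.ext (show (b : ℕ) = q by omega)
        rw [hbq] at hbm
        omega
    have hlt : (⟨q, hq2⟩ : Fin (m + n)) < b := Fin.lt_def.mpr hqb'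
    have hinv2 : OrdSumLe m n leP leQ (ω b) (ω ⟨q, hq2⟩) :=
      Or.inr (Or.inr ⟨hbm, hωq⟩)
    have hkk := hkey _ b hlt hinv2 (Nat.le_of_lt haq) le_rfl
    exact lt_irrefl q hkk.1
  · -- Q case: use the interval (a, q-1]
    have haq' : (a : ℕ) < q - 1 := by
      rcases Nat.lt_or_ge (a : ℕ) (q - 1) with h | h
      · exact h
      · exfalso
        have hav : (a : ℕ) = q - 1 := by omega
        have : a = (⟨q - 1, by omega⟩ : Fin (m + n)) := Fin.ext hav
        rw [this] at ham
        omega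
    have hlt : a < (⟨q - 1, by omega⟩ : Fin (m + n)) := Fin.lt_def.mpr haq'
    have hinv2 : OrdSumLe m n leP leQ (ω ⟨q - 1, by omega⟩) (ω a) :=
      Or.inr (Or.inr ⟨hprev, ham⟩)
    have hkk := hkey a _ hlt hinv2 le_rfl (show q - 1 ≤ (b : ℕ) by omega)
    have h2' : q ≤ q - 1 := hkk.2
    omega

/-- for a `PQ`-reversing listing `ω` of the ordinal sum `PQ`
(`P` on `[m]`, `Q` on `[n]`, both nonempty), the first `n` entries of `ω` lie in
`{m+1,…,m+n}`, the remaining entries lie in `[m]`, and every set of border points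
of `ω` contains `n`. (Positions and elements are 0-indexed via `Fin (m+n)`.) -/
theorem stmt12 (m n : ℕ) (hm : 1 ≤ m) (hn : 1 ≤ n)
    (leP : Fin m → Fin m → Prop) (hP : IsPartialOrder (Fin m) leP)
    (leQ : Fin n → Fin n → Prop) (hQ : IsPartialOrder (Fin n) leQ)
    (ω : Equiv.Perm (Fin (m + n)))
    (hrev : IsReversing (m + n) (OrdSumLe m n leP leQ) ω) :
    (∀ i : Fin (m + n), (i : ℕ) < n → m ≤ (ω i : ℕ)) ∧
      (∀ i : Fin (m + n), n ≤ (i : ℕ) → (ω i : ℕ) < m) ∧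
      (∀ S : Finset ℕ, IsBorderSet (m + n) (OrdSumLe m n leP leQ) ω S → n ∈ S) := by
  have hnb := no_bad_pair m n leP leQ ω hrev
  have part1 : ∀ i : Fin (m + n), (i : ℕ) < n → m ≤ (ω i : ℕ) := by
    intro i hi
    by_contra h
    push_neg at h
    -- there must be a Q-value after position i
    have hq : ∃ q : Fin (m + n), i < q ∧ m ≤ (ω q : ℕ) := by
      by_contra hc
      push_neg at hc
      -- all n positions of Q-values are < i : injection Fin n → Fin i
      let F : Fin n → Fin (i : ℕ) := fun k =>
        ⟨(ω.symm ⟨m + (k : ℕ), by omega⟩ : ℕ), by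
          set pos := ω.symm (⟨m + (k : ℕ), by omega⟩ : Fin (m + n)) with hpos
          have hval : (ω pos : ℕ) = m + (k : ℕ) := by
            rw [hpos, Equiv.apply_symm_apply]
          have hge : m ≤ (ω pos : ℕ) := by omega
          have h1 : ¬ (i < pos) := fun hlt => by
            have := hc pos hlt; omega
          have h2 : pos ≠ i := fun he => by rw [he] at hval; omega
          have := Fin.lt_def.not.mp h1
          push_neg at this
          rcases lt_or_eq_of_le this with h' | h'
          · exact h'
          · exact absurd (Fin.ext h') h2⟩
      have hFinj : Function.Injective F := by
        intro k l hkl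
        have h1 := congrArg Fin.val hkl
        have h2 : ω.symm (⟨m + (k : ℕ), by omega⟩ : Fin (m + n)) =
            ω.symm ⟨m + (l : ℕ), by omega⟩ := Fin.ext h1
        have h3 := ω.symm.injective h2
        have h4 : m + (k : ℕ) = m + (l : ℕ) := congrArg Fin.val h3
        exact Fin.ext (by omega)
      have hcard := Fintype.card_le_of_injective F hFinj
      rw [Fintype.card_fin, Fintype.card_fin] at hcard
      omega
    obtain ⟨q, hiq, hq2⟩ := hq
    exact hnb ⟨i, q, hiq, h, hq2⟩
  have part2 : ∀ i : Fin (m + n), n ≤ (i : ℕ) → (ω i : ℕ) < m := by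
    intro i hi
    by_contra h
    push_neg at h
    -- injection Fin (n+1) → Fin n
    let pos : Fin (n + 1) → Fin (m + n) := fun k =>
      if hk : (k : ℕ) < n then ⟨(k : ℕ), by omega⟩ else i
    have hge : ∀ k, m ≤ (ω (pos k) : ℕ) := by
      intro k
      show m ≤ (ω (if hk : (k : ℕ) < n then (⟨(k : ℕ), by omega⟩ : Fin (m + n)) else i) : ℕ)
      split
      · exact part1 _ (by simpa)
      · exact h
    have hposinj : Function.Injective pos := by
      intro k l hkl
      show k = l
      by_cases hk : (k : ℕ) < n <;> by_cases hl : (l : ℕ) < n <;>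
        simp only [pos, dif_pos, dif_neg, hk, hl] at hkl
      · have hv := congrArg Fin.val hkl
        exact Fin.ext hv
      · exfalso; have := congrArg Fin.val hkl; simp at this; omega
      · exfalso; have := congrArg Fin.val hkl; simp at this; omega
      · exact Fin.ext (by omega)
    let G : Fin (n + 1) → Fin n := fun k =>
      ⟨(ω (pos k) : ℕ) - m, by have h1 := (ω (pos k)).isLt; have h2 := hge k; omega⟩
    have hGinj : Function.Injective G := by
      intro k l hkl
      have h1 : (ω (pos k) : ℕ) - m = (ω (pos l) : ℕ) - m := congrArg Fin.val hkl
      have h2 : (ω (pos k) : ℕ) = (ω (pos l) : ℕ) := by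
        have := hge k; have := hge l; omega
      exact hposinj (ω.injective (Fin.ext h2))
    have hcard := Fintype.card_le_of_injective G hGinj
    rw [Fintype.card_fin, Fintype.card_fin] at hcard
    omega
  refine ⟨part1, part2, ?_⟩
  intro S hS
  have hp1 : (n : ℕ) - 1 < m + n := by omega
  have hp2 : (n : ℕ) < m + n := by omega
  set p1 : Fin (m + n) := ⟨n - 1, hp1⟩
  set p2 : Fin (m + n) := ⟨n, hp2⟩
  have hlt : p1 < p2 := by simp [p1, p2, Fin.lt_def]; omega
  have hv1 : m ≤ (ω p1 : ℕ) := part1 p1 (by simp [p1]; omega)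
  have hv2 : (ω p2 : ℕ) < m := part2 p2 (by simp [p2])
  have hinv : OrdSumLe m n leP leQ (ω p2) (ω p1) := Or.inr (Or.inr ⟨hv2, hv1⟩)
  by_contra hnS
  refine hS.2 p1 p2 hlt ?_ hinv
  intro s hs hcon
  have : s = n := by
    have e1 : (p1 : ℕ) = n - 1 := rfl
    have e2 : (p2 : ℕ) = n := rfl
    omega
  exact hnS (this ▸ hs)
end

section
/- Let P be a partial order on [m] and Q a partial order on [n] with m, n ≥ 1, let PQ be their ordinal sum on [m+n], and let ω ∈ Rev(PQ). Let ω' = (ω_1 − m, …, ω_n − m), which is a Q-listing, and ω'' = (ω_{n+1}, …, ω_{m+n}), which is a P-listing. Then for every S ⊆ [m+n−1]: S ∈ Comp(PQ, ω) if and only if n ∈ S, S ∩ [n−1] ∈ Comp(Q, ω'), and {s − n : s ∈ S, n < s ≤ m+n−1} ∈ Comp(P, ω''). Consequently the poset Comp(PQ, ω) ordered by inclusion is isomorphic to the Cartesian product Comp(Q, ω') × Comp(P, ω''). -/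
/-- let `ω ∈ Rev(PQ)`; with `ω' = (ω_1 − m, …, ω_n − m)` (a
`Q`-listing) and `ω'' = (ω_{n+1}, …, ω_{m+n})` (a `P`-listing), a set
`S ⊆ [m+n−1]` is a set of border points of `ω` iff `n ∈ S`, `S ∩ [n−1]` is a set
of border points of `ω'`, and `{s − n : s ∈ S, s > n}` is a set of border points
of `ω''`; consequently `Comp(PQ, ω) ≅ Comp(Q, ω') × Comp(P, ω'')` as posets
ordered by inclusion. -/
theorem stmt13 (m n : ℕ) (hm : 1 ≤ m) (hn : 1 ≤ n)
    (leP : Fin m → Fin m → Prop) (hP : IsPartialOrder (Fin m) leP)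
    (leQ : Fin n → Fin n → Prop) (hQ : IsPartialOrder (Fin n) leQ)
    (ω : Equiv.Perm (Fin (m + n)))
    (hrev : IsReversing (m + n) (OrdSumLe m n leP leQ) ω)
    (ω' : Equiv.Perm (Fin n))
    (hω' : ∀ i : Fin n, (ω' i : ℕ) = (ω ⟨i, by have := i.isLt; omega⟩ : ℕ) - m)
    (ω'' : Equiv.Perm (Fin m))
    (hω'' : ∀ i : Fin m, (ω'' i : ℕ) = (ω ⟨n + i, by have := i.isLt; omega⟩ : ℕ)) :
    (∀ S : Finset ℕ, S ⊆ Finset.Ico 1 (m + n) →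
      (IsBorderSet (m + n) (OrdSumLe m n leP leQ) ω S ↔
        n ∈ S ∧ IsBorderSet n leQ ω' (S ∩ Finset.Ico 1 n) ∧
          IsBorderSet m leP ω'' ((S.filter fun s => n < s).image fun s => s - n))) ∧
    Nonempty
      ({S : Finset ℕ // IsBorderSet (m + n) (OrdSumLe m n leP leQ) ω S} ≃o
        {S : Finset ℕ // IsBorderSet n leQ ω' S} ×
          {S : Finset ℕ // IsBorderSet m leP ω'' S}) := by
  classical
  -- positions ≥ n carry values < m
  have hp : ∀ i : Fin (m + n), n ≤ (i : ℕ) → (ω i : ℕ) < m := by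
    intro i hi
    have hk : (i : ℕ) - n < m := by have := i.isLt; omega
    have h2 : (ω'' ⟨(i:ℕ) - n, hk⟩ : ℕ)
        = (ω ⟨n + ((i:ℕ) - n), by have := i.isLt; omega⟩ : ℕ) := hω'' ⟨(i:ℕ) - n, hk⟩
    have he : (⟨n + ((i:ℕ) - n), by have := i.isLt; omega⟩ : Fin (m+n)) = i :=
      Fin.ext (by show n + ((i:ℕ) - n) = (i:ℕ); omega)
    rw [he] at h2
    rw [← h2]
    exact (ω'' _).isLt
  -- positions < n carry values ≥ m
  have hq : ∀ i : Fin (m + n), (i : ℕ) < n → m ≤ (ω i : ℕ) := by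
    intro i hi
    by_contra hlt
    push_neg at hlt
    set k := ω''.symm ⟨(ω i : ℕ), hlt⟩ with hkdef
    have h1 : (ω'' k : ℕ) = (ω ⟨n + (k:ℕ), by have := k.isLt; omega⟩ : ℕ) := hω'' k
    have h2 : (ω'' k : ℕ) = (ω i : ℕ) := by rw [hkdef, Equiv.apply_symm_apply]
    have h3 : (⟨n + (k:ℕ), by have := k.isLt; omega⟩ : Fin (m+n)) = i :=
      ω.injective (Fin.ext (by rw [← h1, h2]))
    have h4 : n + (k:ℕ) = (i:ℕ) := congrArg Fin.val h3
    omega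
  have hvp : ∀ (i : Fin (m+n)) (hi : n ≤ (i:ℕ)),
      (ω'' ⟨(i:ℕ) - n, by have := i.isLt; omega⟩ : ℕ) = (ω i : ℕ) := by
    intro i hi
    have h2 : (ω'' ⟨(i:ℕ) - n, by have := i.isLt; omega⟩ : ℕ)
        = (ω ⟨n + ((i:ℕ) - n), by have := i.isLt; omega⟩ : ℕ) := hω'' _
    have he : (⟨n + ((i:ℕ) - n), by have := i.isLt; omega⟩ : Fin (m+n)) = i :=
      Fin.ext (by show n + ((i:ℕ) - n) = (i:ℕ); omega)
    rw [he] at h2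
    exact h2
  -- transfer lemmas
  have liftQ : ∀ (i j : Fin (m+n)) (hi : (i:ℕ) < n) (hj : (j:ℕ) < n),
      OrdSumLe m n leP leQ (ω j) (ω i) ↔ leQ (ω' ⟨(j:ℕ), hj⟩) (ω' ⟨(i:ℕ), hi⟩) := by
    intro i j hi hj
    have hqi := hq i hi; have hqj := hq j hj
    have ei : (⟨(ω i : ℕ) - m, by have := (ω i).isLt; omega⟩ : Fin n) = ω' ⟨(i:ℕ), hi⟩ :=
      Fin.ext (hω' ⟨(i:ℕ), hi⟩).symm
    have ej : (⟨(ω j : ℕ) - m, by have := (ω j).isLt; omega⟩ : Fin n) = ω' ⟨(j:ℕ), hj⟩ :=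
      Fin.ext (hω' ⟨(j:ℕ), hj⟩).symm
    constructor
    · rintro (⟨h1, h2, h3⟩ | ⟨h1, h2, h3⟩ | ⟨h1, h2⟩)
      · exact absurd h1 (by omega)
      · rwa [ej, ei] at h3
      · exact absurd h1 (by omega)
    · intro h
      exact Or.inr (Or.inl ⟨hqj, hqi, by rwa [ej, ei]⟩)
  have liftP : ∀ (i j : Fin (m+n)) (hi : n ≤ (i:ℕ)) (hj : n ≤ (j:ℕ)),
      OrdSumLe m n leP leQ (ω j) (ω i) ↔
        leP (ω'' ⟨(j:ℕ) - n, by have := j.isLt; omega⟩)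
            (ω'' ⟨(i:ℕ) - n, by have := i.isLt; omega⟩) := by
    intro i j hi hj
    have hpi := hp i hi; have hpj := hp j hj
    have ei : (⟨(ω i : ℕ), hpi⟩ : Fin m)
        = ω'' ⟨(i:ℕ) - n, by have := i.isLt; omega⟩ := Fin.ext (hvp i hi).symm
    have ej : (⟨(ω j : ℕ), hpj⟩ : Fin m)
        = ω'' ⟨(j:ℕ) - n, by have := j.isLt; omega⟩ := Fin.ext (hvp j hj).symm
    constructor
    · rintro (⟨h1, h2, h3⟩ | ⟨h1, h2, h3⟩ | ⟨h1, h2⟩)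
      · rwa [ej, ei] at h3
      · exact absurd h1 (by omega)
      · exact absurd h2 (by omega)
    · intro h
      exact Or.inl ⟨hpj, hpi, by rwa [ej, ei]⟩
  -- the key characterization
  have key : ∀ S : Finset ℕ, S ⊆ Finset.Ico 1 (m + n) →
      (IsBorderSet (m + n) (OrdSumLe m n leP leQ) ω S ↔
        n ∈ S ∧ IsBorderSet n leQ ω' (S ∩ Finset.Ico 1 n) ∧
          IsBorderSet m leP ω'' ((S.filter fun s => n < s).image fun s => s - n)) := by
    intro S hS
    constructor
    · rintro ⟨hS1, hB⟩
      refine ⟨?_, ⟨Finset.inter_subset_right, ?_⟩, ⟨?_, ?_⟩⟩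
      · -- n ∈ S
        by_contra hnS
        have h := hB ⟨n-1, by omega⟩ ⟨n, by omega⟩ (Fin.mk_lt_mk.2 (by omega))
          (by
            intro s hs hcon
            have hcon' : n - 1 < s ∧ s ≤ n := hcon
            have : s = n := by omega
            exact hnS (this ▸ hs))
        apply h
        exact Or.inr (Or.inr ⟨hp ⟨n, by omega⟩ (le_refl n), hq ⟨n-1, by omega⟩ (by show n - 1 < n; omega)⟩)
      · -- Q border condition
        intro i j hij hno
        have hij' : (i:ℕ) < (j:ℕ) := hij
        have h := hB ⟨(i:ℕ), by omega⟩ ⟨(j:ℕ), by omega⟩ (Fin.mk_lt_mk.2 hij')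
          (by
            intro s hs hcon
            have hcon' : (i:ℕ) < s ∧ s ≤ (j:ℕ) := hcon
            have h1 := hS hs
            rw [Finset.mem_Ico] at h1
            refine hno s ?_ hcon'
            rw [Finset.mem_inter, Finset.mem_Ico]
            exact ⟨hs, h1.1, by have := j.isLt; omega⟩)
        intro hle
        exact h ((liftQ ⟨(i:ℕ), by omega⟩ ⟨(j:ℕ), by omega⟩ i.isLt j.isLt).2 hle)
      · -- P part subset
        intro t ht
        rw [Finset.mem_image] at ht
        obtain ⟨s, hs, rfl⟩ := ht
        rw [Finset.mem_filter] at hs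
        have h1 := hS hs.1
        rw [Finset.mem_Ico] at h1 ⊢
        have := hs.2
        omega
      · -- P border condition
        intro i j hij hno
        have hij' : (i:ℕ) < (j:ℕ) := hij
        have h := hB ⟨n + (i:ℕ), by have := i.isLt; omega⟩ ⟨n + (j:ℕ), by have := j.isLt; omega⟩
          (Fin.mk_lt_mk.2 (by omega))
          (by
            intro s hs hcon
            have hcon' : n + (i:ℕ) < s ∧ s ≤ n + (j:ℕ) := hcon
            refine hno (s - n) ?_ ⟨by omega, by omega⟩
            rw [Finset.mem_image]
            exact ⟨s, Finset.mem_filter.2 ⟨hs, by omega⟩, rfl⟩)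
        intro hle
        apply h
        refine (liftP ⟨n + (i:ℕ), by have := i.isLt; omega⟩
          ⟨n + (j:ℕ), by have := j.isLt; omega⟩ (by show n ≤ n + (i:ℕ); omega) (by show n ≤ n + (j:ℕ); omega)).2 ?_
        have ei : (⟨(n + (i:ℕ)) - n, by have := i.isLt; omega⟩ : Fin m) = i :=
          Fin.ext (by show n + (i:ℕ) - n = (i:ℕ); omega)
        have ej : (⟨(n + (j:ℕ)) - n, by have := j.isLt; omega⟩ : Fin m) = j :=
          Fin.ext (by show n + (j:ℕ) - n = (j:ℕ); omega)
        rw [ei, ej]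
        exact hle
    · rintro ⟨hnS, hQb, hPb⟩
      refine ⟨hS, ?_⟩
      intro i j hij hno hle
      have hij' : (i:ℕ) < (j:ℕ) := hij
      rcases Nat.lt_or_ge (j:ℕ) n with hcase | hcase
      · -- both in Q zone
        have hin : (i:ℕ) < n := by omega
        refine hQb.2 ⟨(i:ℕ), hin⟩ ⟨(j:ℕ), hcase⟩ (Fin.mk_lt_mk.2 hij') ?_
          ((liftQ i j hin hcase).1 hle)
        intro s hs hcon
        have hcon' : (i:ℕ) < s ∧ s ≤ (j:ℕ) := hcon
        exact hno s (Finset.mem_inter.1 hs).1 hcon'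
      · -- j in P zone; i must be too
        have hni : n ≤ (i:ℕ) := by
          by_contra h'
          push_neg at h'
          exact hno n hnS ⟨h', hcase⟩
        refine hPb.2 ⟨(i:ℕ) - n, by have := i.isLt; omega⟩ ⟨(j:ℕ) - n, by have := j.isLt; omega⟩
          (Fin.mk_lt_mk.2 (by omega)) ?_ ((liftP i j hni hcase).1 hle)
        intro t ht hcon
        have hcon' : (i:ℕ) - n < t ∧ t ≤ (j:ℕ) - n := hcon
        rw [Finset.mem_image] at ht
        obtain ⟨s, hs, rfl⟩ := ht
        rw [Finset.mem_filter] at hs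
        exact hno s hs.1 ⟨by omega, by omega⟩
  refine ⟨key, ?_⟩
  -- the order isomorphism
  set g0 : Finset ℕ → Finset ℕ → Finset ℕ :=
    fun A B => A ∪ insert n (B.image fun s => s + n) with hg0
  have hsub : ∀ A B : Finset ℕ, A ⊆ Finset.Ico 1 n → B ⊆ Finset.Ico 1 m →
      g0 A B ⊆ Finset.Ico 1 (m + n) := by
    intro A B hA hB s hs
    rw [hg0] at hs
    simp only [Finset.mem_union, Finset.mem_insert, Finset.mem_image] at hs
    rw [Finset.mem_Ico]
    rcases hs with h | h | ⟨b, hb, rfl⟩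
    · have := hA h; rw [Finset.mem_Ico] at this; omega
    · omega
    · have := hB hb; rw [Finset.mem_Ico] at this; omega
  have eq1 : ∀ A B : Finset ℕ, A ⊆ Finset.Ico 1 n → B ⊆ Finset.Ico 1 m →
      g0 A B ∩ Finset.Ico 1 n = A := by
    intro A B hA hB
    ext s
    rw [hg0]
    simp only [Finset.mem_inter, Finset.mem_union, Finset.mem_insert, Finset.mem_image,
      Finset.mem_Ico]
    constructor
    · rintro ⟨h | h | ⟨b, hb, rfl⟩, h1, h2⟩
      · exact h
      · omega
      · have := hB hb; rw [Finset.mem_Ico] at this; omega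
    · intro h
      have := hA h; rw [Finset.mem_Ico] at this
      exact ⟨Or.inl h, this.1, this.2⟩
  have eq2 : ∀ A B : Finset ℕ, A ⊆ Finset.Ico 1 n → B ⊆ Finset.Ico 1 m →
      ((g0 A B).filter fun s => n < s).image (fun s => s - n) = B := by
    intro A B hA hB
    ext t
    rw [hg0]
    simp only [Finset.mem_image, Finset.mem_filter, Finset.mem_union, Finset.mem_insert]
    constructor
    · rintro ⟨s, ⟨h | h | ⟨b, hb, rfl⟩, hns⟩, rfl⟩
      · have := hA h; rw [Finset.mem_Ico] at this; exact absurd hns (by omega)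
      · exact absurd hns (by omega)
      · have : b + n - n = b := by omega
        rw [this]; exact hb
    · intro ht
      have hb := hB ht; rw [Finset.mem_Ico] at hb
      exact ⟨t + n, ⟨Or.inr (Or.inr ⟨t, ht, rfl⟩), by omega⟩, by omega⟩
  have eq3 : ∀ S : Finset ℕ, S ⊆ Finset.Ico 1 (m + n) → n ∈ S →
      g0 (S ∩ Finset.Ico 1 n) ((S.filter fun s => n < s).image fun s => s - n) = S := by
    intro S hS hnS
    ext s
    rw [hg0]
    simp only [Finset.mem_union, Finset.mem_inter, Finset.mem_insert, Finset.mem_image,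
      Finset.mem_filter, Finset.mem_Ico]
    constructor
    · rintro (⟨h, _⟩ | h | ⟨b, ⟨u, ⟨hu, hnu⟩, rfl⟩, rfl⟩)
      · exact h
      · exact h ▸ hnS
      · have : u - n + n = u := by omega
        rw [this]; exact hu
    · intro hs
      have h1 := hS hs; rw [Finset.mem_Ico] at h1
      rcases Nat.lt_trichotomy s n with h | h | h
      · exact Or.inl ⟨hs, h1.1, h⟩
      · exact Or.inr (Or.inl h)
      · exact Or.inr (Or.inr ⟨s - n, ⟨s, ⟨hs, h⟩, rfl⟩, by omega⟩)
  have hgb : ∀ (A : {S : Finset ℕ // IsBorderSet n leQ ω' S})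
      (B : {S : Finset ℕ // IsBorderSet m leP ω'' S}),
      IsBorderSet (m + n) (OrdSumLe m n leP leQ) ω (g0 A.1 B.1) := by
    intro A B
    refine (key _ (hsub _ _ A.2.1 B.2.1)).2 ⟨?_, ?_, ?_⟩
    · rw [hg0]
      simp only [Finset.mem_union, Finset.mem_insert]
      exact Or.inr (Or.inl trivial)
    · rw [eq1 _ _ A.2.1 B.2.1]; exact A.2
    · rw [eq2 _ _ A.2.1 B.2.1]; exact B.2
  refine ⟨⟨⟨fun S => (⟨S.1 ∩ Finset.Ico 1 n, ((key S.1 S.2.1).1 S.2).2.1⟩,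
      ⟨(S.1.filter fun s => n < s).image fun s => s - n, ((key S.1 S.2.1).1 S.2).2.2⟩),
      fun p => ⟨g0 p.1.1 p.2.1, hgb p.1 p.2⟩, ?_, ?_⟩, ?_⟩⟩
  · intro S
    exact Subtype.ext (eq3 S.1 S.2.1 ((key S.1 S.2.1).1 S.2).1)
  · intro p
    refine Prod.ext ?_ ?_
    · exact Subtype.ext (eq1 _ _ p.1.2.1 p.2.2.1)
    · exact Subtype.ext (eq2 _ _ p.1.2.1 p.2.2.1)
  · intro S T
    constructor
    · intro h
      have h1 : S.1 ∩ Finset.Ico 1 n ⊆ T.1 ∩ Finset.Ico 1 n := h.1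
      have h2 : (S.1.filter fun s => n < s).image (fun s => s - n) ⊆
          (T.1.filter fun s => n < s).image (fun s => s - n) := h.2
      show S.1 ⊆ T.1
      intro s hs
      have hs' := S.2.1 hs
      rw [Finset.mem_Ico] at hs'
      have hnT : n ∈ T.1 := ((key T.1 T.2.1).1 T.2).1
      rcases Nat.lt_trichotomy s n with hlt | heq | hgt
      · have : s ∈ T.1 ∩ Finset.Ico 1 n :=
          h1 (Finset.mem_inter.2 ⟨hs, Finset.mem_Ico.2 ⟨hs'.1, hlt⟩⟩)
        exact (Finset.mem_inter.1 this).1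
      · exact heq ▸ hnT
      · have hmem : s - n ∈ (T.1.filter fun s => n < s).image (fun s => s - n) :=
          h2 (Finset.mem_image.2 ⟨s, Finset.mem_filter.2 ⟨hs, hgt⟩, rfl⟩)
        rw [Finset.mem_image] at hmem
        obtain ⟨u, hu, huv⟩ := hmem
        rw [Finset.mem_filter] at hu
        have : u = s := by omega
        exact this ▸ hu.1
    · intro h
      have h' : S.1 ⊆ T.1 := h
      constructor
      · show S.1 ∩ Finset.Ico 1 n ⊆ T.1 ∩ Finset.Ico 1 n
        exact Finset.inter_subset_inter h' (Finset.Subset.refl _)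
      · show (S.1.filter fun s => n < s).image (fun s => s - n) ⊆
          (T.1.filter fun s => n < s).image (fun s => s - n)
        exact Finset.image_subset_image (Finset.filter_subset_filter _ h')
end

section
/- Let P be a partial order on [n] and ω a P-listing. (a) If ω_{l+1} ≤_P ω_l for some l ∈ [n-1], then l ∈ S for every S ∈ Comp(P, ω); in particular l belongs to every inclusion-minimal member of Comp(P, ω). (b) Conversely, let M be an inclusion-minimal member of Comp(P, ω); if {1, 2} ⊆ M then ω_2 ≤_P ω_1; if {n−2, n−1} ⊆ M then ω_n ≤_P ω_{n−1}; and if {l−1, l, l+1} ⊆ M for some l with 2 ≤ l ≤ n−2, then ω_{l+1} ≤_P ω_l. -/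
lemma key_lemma (n : ℕ) (le : Fin n → Fin n → Prop) (ω : Equiv.Perm (Fin n))
    (M : Finset ℕ) (hM : IsBorderSet n le ω M)
    (hmin : ∀ M' : Finset ℕ, IsBorderSet n le ω M' → M' ⊆ M → M' = M)
    (m : ℕ) (hm : m ∈ M) :
    ∃ i j : Fin n, i < j ∧ le (ω j) (ω i) ∧ (i : ℕ) < m ∧ m ≤ (j : ℕ) ∧
      ∀ s ∈ M, s ≠ m → ¬((i : ℕ) < s ∧ s ≤ (j : ℕ)) := by
  have hne : ¬ IsBorderSet n le ω (M.erase m) := by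
    intro h
    have heq := hmin _ h (Finset.erase_subset _ _)
    have : m ∈ M.erase m := by rw [heq]; exact hm
    exact (Finset.notMem_erase m M) this
  rw [IsBorderSet] at hne
  push_neg at hne
  obtain ⟨i, j, hij, hno0, hlej⟩ := hne (fun s hs => hM.1 (Finset.mem_of_mem_erase hs))
  have hno : ∀ s ∈ M.erase m, ¬((i : ℕ) < s ∧ s ≤ (j : ℕ)) := by
    intro s hs hc
    have := hno0 s hs hc.1
    omega
  -- some element of M lies in (i, j]; must be m
  by_cases hmem : (i : ℕ) < m ∧ m ≤ (j : ℕ)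
  · exact ⟨i, j, hij, hlej, hmem.1, hmem.2, fun s hs hsm =>
      hno s (Finset.mem_erase.mpr ⟨hsm, hs⟩)⟩
  · exfalso
    apply hM.2 i j hij _ hlej
    intro s hs hc
    by_cases hsm : s = m
    · exact hmem (hsm ▸ hc)
    · exact hno s (Finset.mem_erase.mpr ⟨hsm, hs⟩) hc

/-- (a) if `ω_{l+1} ≤_P ω_l` (1-indexed; 0-indexed positions `l-1`
and `l`) for some `l ∈ [n-1]`, then `l` belongs to every set of border points of
`ω`, in particular to every inclusion-minimal one. (b) Conversely, for an
inclusion-minimal member `M` of `Comp(P, ω)`: if `{1,2} ⊆ M` then `ω_2 ≤_P ω_1`;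
if `{n−2, n−1} ⊆ M` then `ω_n ≤_P ω_{n−1}`; and if `{l−1, l, l+1} ⊆ M` with
`2 ≤ l ≤ n−2` then `ω_{l+1} ≤_P ω_l`. -/
theorem stmt18 (n : ℕ) (le : Fin n → Fin n → Prop) (hle : IsPartialOrder (Fin n) le)
    (ω : Equiv.Perm (Fin n)) :
    (∀ (l : ℕ) (_ : 1 ≤ l) (hl : l < n),
        le (ω ⟨l, hl⟩) (ω ⟨l - 1, by omega⟩) →
        ∀ S : Finset ℕ, IsBorderSet n le ω S → l ∈ S) ∧
      (∀ M : Finset ℕ, IsBorderSet n le ω M →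
        (∀ M' : Finset ℕ, IsBorderSet n le ω M' → M' ⊆ M → M' = M) →
        ((∀ h2 : 2 < n, 1 ∈ M → 2 ∈ M →
            le (ω ⟨1, by omega⟩) (ω ⟨0, by omega⟩)) ∧
          (∀ h2 : 2 < n, n - 2 ∈ M → n - 1 ∈ M →
            le (ω ⟨n - 1, by omega⟩) (ω ⟨n - 2, by omega⟩)) ∧
          ∀ (l : ℕ) (_ : 2 ≤ l) (_ : l ≤ n - 2) (hln : l + 1 < n),
            l - 1 ∈ M → l ∈ M → l + 1 ∈ M →
            le (ω ⟨l, by omega⟩) (ω ⟨l - 1, by omega⟩))) := by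
  constructor
  · intro l hl1 hl hle' S hS
    by_contra hlS
    apply hS.2 ⟨l - 1, by omega⟩ ⟨l, hl⟩ (by simp [Fin.lt_def]; omega) _ hle'
    intro s hs ⟨h1, h2⟩
    simp only at h1 h2
    have : s = l := by omega
    exact hlS (this ▸ hs)
  · intro M hM hmin
    refine ⟨?_, ?_, ?_⟩
    · intro h2 h1M h2M
      obtain ⟨i, j, hij, hlej, him, hmj, hno⟩ := key_lemma n le ω M hM hmin 1 h1M
      have hi : (i : ℕ) = 0 := by omega
      have hj : (j : ℕ) = 1 := by
        by_contra hj
        exact hno 2 h2M (by omega) (by omega)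
      have : i = ⟨0, by omega⟩ := Fin.ext hi
      have : j = ⟨1, by omega⟩ := Fin.ext hj
      convert hlej using 2 <;> simp_all
    · intro h2 hM2 hM1
      obtain ⟨i, j, hij, hlej, him, hmj, hno⟩ := key_lemma n le ω M hM hmin (n-1) hM1
      have hj : (j : ℕ) = n - 1 := by have := j.isLt; omega
      have hi : (i : ℕ) = n - 2 := by
        by_contra hi
        refine hno (n-2) hM2 (by omega) (by omega)
      have : i = ⟨n - 2, by omega⟩ := Fin.ext hi
      have : j = ⟨n - 1, by omega⟩ := Fin.ext hj
      convert hlej using 2 <;> simp_all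
    · intro l hl2 hln2 hln hMl1 hMl hMl2
      obtain ⟨i, j, hij, hlej, him, hmj, hno⟩ := key_lemma n le ω M hM hmin l hMl
      have hi : (i : ℕ) = l - 1 := by
        by_contra hi
        exact hno (l-1) hMl1 (by omega) (by omega)
      have hj : (j : ℕ) = l := by
        by_contra hj
        exact hno (l+1) hMl2 (by omega) (by omega)
      have : i = ⟨l - 1, by omega⟩ := Fin.ext hi
      have : j = ⟨l, by omega⟩ := Fin.ext hj
      convert hlej using 2 <;> simp_all
end
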